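/- arXiv:0904.3548 — 6 statements merged into one kernel-verified Lean document; each statement's English description precedes it below -/
import Mathlib

section
/- Let g be a 2n×2n matrix over K all of whose entries lie in O_K, whose entries strictly below the diagonal lie in t·O_K, and with det g ∈ O_K^×, and suppose gᵀJg = c·J for some c ∈ K^×. Then c^n = det g. (Equivalently: every element of the stabilizer in GO_{2n}(K) of the standard complete lattice chain lies in the identity component GO_{2n}°(K).) -/
/-!
From `gᵀ J g = c J` one gets `(det g)² = c²ⁿ`, so `det g = ± cⁿ`; taking orders, `c` has
order `0`, so `g` and `c` live over `O_K = k[[t]]`. Modulo `t` the matrix `g` becomes upper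
triangular, and for an upper triangular similitude of the split form the relation pairs the
diagonal entries as `ḡᵢᵢ ḡᵢ*ᵢ* = c̄`, whence `det ḡ = c̄ⁿ`. As `det ḡ ≠ 0` and `2 ≠ 0` in `k`,
the sign `-` is impossible.
-/

open Matrix

namespace OrthLM

/-- The matrix of the split symmetric bilinear form `h` on `K^{2n}`: ones on the
antidiagonal (`J i j = 1` iff `j = i* = 2n+1-i`), zeros elsewhere. -/
noncomputable def Jmat (k : Type*) [Field k] (n : ℕ) :
    Matrix (Fin (2*n)) (Fin (2*n)) (LaurentSeries k) :=
  fun i j => if j = i.rev then 1 else 0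

theorem det_sq_of_transpose_mul_mul_eq_smul {ι R : Type*} [Fintype ι] [DecidableEq ι]
    [CommRing R] {A M : Matrix ι ι R} (hA : IsUnit A.det) {c : R} (h : Mᵀ * A * M = c • A) :
    M.det ^ 2 = c ^ Fintype.card ι := by
  have hdet := congrArg det h
  rw [det_mul, det_mul, det_transpose, det_smul, mul_right_comm] at hdet
  rw [sq]
  exact hA.mul_left_injective hdet

def exchangeMatrix (R : Type*) [Zero R] [One R] (m : ℕ) : Matrix (Fin m) (Fin m) R :=
  fun i j => if j = i.rev then 1 else 0

theorem Jmat_eq_exchangeMatrix (k : Type*) [Field k] (n : ℕ) :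
    Jmat k n = exchangeMatrix (LaurentSeries k) (2 * n) :=
  rfl

section exchangeMatrix

variable {R : Type*} [CommRing R] {m : ℕ}

theorem mul_exchangeMatrix_apply (A : Matrix (Fin m) (Fin m) R) (i j : Fin m) :
    (A * exchangeMatrix R m) i j = A i j.rev := by
  simp [exchangeMatrix, mul_apply, @eq_comm _ j, Fin.rev_eq_iff]

theorem exchangeMatrix_mul_self : exchangeMatrix R m * exchangeMatrix R m = 1 := by
  ext i j
  simp [mul_exchangeMatrix_apply, exchangeMatrix, one_apply, eq_comm]

theorem isUnit_det_exchangeMatrix : IsUnit (exchangeMatrix R m).det :=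
  IsUnit.of_mul_eq_one _ (by rw [← det_mul, exchangeMatrix_mul_self, det_one])

theorem map_transpose_mul_exchangeMatrix_mul {S : Type*} [CommRing S] (f : R →+* S)
    (M : Matrix (Fin m) (Fin m) R) :
    (Mᵀ * exchangeMatrix R m * M).map f = (M.map f)ᵀ * exchangeMatrix S m * M.map f := by
  rw [Matrix.map_mul, Matrix.map_mul, transpose_map]
  congr
  ext i j
  simp [exchangeMatrix, apply_ite f]

theorem map_smul_exchangeMatrix {S : Type*} [CommRing S] (f : R →+* S) (c : R) :
    (c • exchangeMatrix R m).map f = f c • exchangeMatrix S m := by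
  ext i j
  simp [exchangeMatrix, apply_ite f]

theorem transpose_mul_exchangeMatrix_mul_apply (M : Matrix (Fin m) (Fin m) R) (i j : Fin m) :
    (Mᵀ * exchangeMatrix R m * M) i j = ∑ b, M b.rev i * M b j := by
  simp only [mul_apply (M := Mᵀ * exchangeMatrix R m), mul_exchangeMatrix_apply,
    transpose_apply]

theorem diag_mul_diag_rev_of_isUpperTriangular {M : Matrix (Fin m) (Fin m) R}
    (hM : M.IsUpperTriangular) {c : R} (h : Mᵀ * exchangeMatrix R m * M = c • exchangeMatrix R m)
    (i : Fin m) : M i i * M i.rev i.rev = c := by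
  have hi := congrFun₂ h i i.rev
  rw [transpose_mul_exchangeMatrix_mul_apply, Finset.sum_eq_single i.rev] at hi
  · simpa [exchangeMatrix] using hi
  · intro b _ hb
    rcases lt_or_gt_of_ne hb with hlt | hgt
    · rw [show M b.rev i = 0 from hM (Fin.lt_rev_iff.mp hlt), zero_mul]
    · rw [show M b i.rev = 0 from hM hgt, mul_zero]
  · simp

theorem prod_eq_pow_of_mul_rev_eq {n : ℕ} {d : Fin (2 * n) → R} {c : R}
    (h : ∀ i, d i * d i.rev = c) : ∏ i, d i = c ^ n := by
  have hn : n + n = 2 * n := (two_mul n).symm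
  have hsecond : ∏ i, d (Fin.cast hn (Fin.natAdd n i)) =
      ∏ i, d (Fin.cast hn (Fin.castAdd n i)).rev :=
    Fintype.prod_equiv Fin.revPerm _ _ fun i => congrArg d <| Fin.ext <| by simp; omega
  rw [← Fin.prod_congr' d hn, Fin.prod_univ_add, hsecond, ← Finset.prod_mul_distrib]
  simp [h]

theorem det_eq_pow_of_isUpperTriangular {n : ℕ} {M : Matrix (Fin (2 * n)) (Fin (2 * n)) R}
    (hM : M.IsUpperTriangular) {c : R}
    (h : Mᵀ * exchangeMatrix R (2 * n) * M = c • exchangeMatrix R (2 * n)) : M.det = c ^ n := by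
  rw [det_of_isUpperTriangular hM]
  exact prod_eq_pow_of_mul_rev_eq (diag_mul_diag_rev_of_isUpperTriangular hM h)

end exchangeMatrix

theorem det_eq_pow_of_map_isUpperTriangular {R F : Type*} [CommRing R] [NoZeroDivisors R]
    [CommRing F] [NoZeroDivisors F] (h2 : (2 : F) ≠ 0) (ψ : R →+* F) {n : ℕ}
    {G : Matrix (Fin (2 * n)) (Fin (2 * n)) R} {C : R}
    (hG : Gᵀ * exchangeMatrix R (2 * n) * G = C • exchangeMatrix R (2 * n))
    (htri : (G.map ψ).IsUpperTriangular) (hdet : ψ G.det ≠ 0) : G.det = C ^ n := by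
  have hsq : G.det ^ 2 = (C ^ n) ^ 2 := by
    rw [det_sq_of_transpose_mul_mul_eq_smul isUnit_det_exchangeMatrix hG, Fintype.card_fin,
      ← pow_mul, mul_comm]
  have hred : ψ G.det = ψ C ^ n := by
    rw [RingHom.map_det, RingHom.mapMatrix_apply]
    refine det_eq_pow_of_isUpperTriangular htri ?_
    rw [← map_transpose_mul_exchangeMatrix_mul, hG, map_smul_exchangeMatrix]
  refine (sq_eq_sq_iff_eq_or_eq_neg.mp hsq).resolve_right fun hneg => ?_
  have hself : ψ G.det = -ψ G.det :=
    calc ψ G.det = ψ C ^ n := hred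
      _ = -ψ G.det := by rw [hneg, map_neg, map_pow, neg_neg]
  exact mul_ne_zero h2 hdet (by linear_combination hself)

open HahnSeries

section LaurentSeries

variable {R : Type*} [CommRing R]

theorem exists_ofPowerSeries_eq {x : LaurentSeries R} (hx : 0 ≤ x.order) :
    ∃ P : PowerSeries R, ofPowerSeries ℤ R P = x :=
  ⟨_, LaurentSeries.X_order_mul_powerSeriesPart (Int.toNat_of_nonneg hx)⟩

theorem constantCoeff_eq_coeff_ofPowerSeries (P : PowerSeries R) :
    PowerSeries.constantCoeff P = (ofPowerSeries ℤ R P).coeff 0 := by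
  rw [← PowerSeries.coeff_zero_eq_constantCoeff_apply, ← ofPowerSeries_apply_coeff (Γ := ℤ),
    Nat.cast_zero]

end LaurentSeries

theorem stabilizer_in_identity_component_general (k : Type*) [Field k] (hk2 : (2 : k) ≠ 0)
    (n : ℕ) (hn : 2 ≤ n)
    (g : Matrix (Fin (2*n)) (Fin (2*n)) (LaurentSeries k))
    (hOK : ∀ i j, g i j = 0 ∨ 0 ≤ (g i j).order)
    (hbelow : ∀ i j : Fin (2*n), j < i → (g i j = 0 ∨ 1 ≤ (g i j).order))
    (hdet_ne : g.det ≠ 0) (hdet_unit : (g.det).order = 0)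
    (c : LaurentSeries k)
    (hsim : gᵀ * Jmat k n * g = c • Jmat k n) :
    c ^ n = g.det := by
  rw [Jmat_eq_exchangeMatrix] at hsim
  have hc : 0 ≤ c.order := by
    have h := congrArg order (det_sq_of_transpose_mul_mul_eq_smul isUnit_det_exchangeMatrix hsim)
    rw [order_pow, order_pow, hdet_unit, smul_zero, Fintype.card_fin, eq_comm, smul_eq_zero] at h
    exact (h.resolve_left (by omega)).ge
  choose G hG using fun i j => exists_ofPowerSeries_eq ((hOK i j).elim (by simp [·]) id)
  obtain ⟨C, rfl⟩ := exists_ofPowerSeries_eq hc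
  obtain rfl : (of G).map (ofPowerSeries ℤ k) = g := ext hG
  have hsim' : (of G)ᵀ * exchangeMatrix _ (2 * n) * of G = C • exchangeMatrix _ (2 * n) :=
    map_injective (ofPowerSeries_injective (Γ := ℤ)) <| by
      dsimp only
      rwa [map_transpose_mul_exchangeMatrix_mul, map_smul_exchangeMatrix]
  have htri : ((of G).map PowerSeries.constantCoeff).IsUpperTriangular := fun i j hij => by
    rw [map_apply, of_apply, constantCoeff_eq_coeff_ofPowerSeries, hG]
    exact (hbelow i j hij).elim (fun h => by rw [h, coeff_zero])
      fun h => coeff_eq_zero_of_lt_order (by omega)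
  have hdet : PowerSeries.constantCoeff (of G).det ≠ 0 := by
    rw [constantCoeff_eq_coeff_ofPowerSeries, RingHom.map_det, RingHom.mapMatrix_apply,
      ← hdet_unit]
    exact mt coeff_order_eq_zero.mp hdet_ne
  rw [← RingHom.mapMatrix_apply, ← RingHom.map_det,
    det_eq_pow_of_map_isUpperTriangular hk2 _ hsim' htri hdet, map_pow]

/-- Let `K = k((t))`, `char k ≠ 2`, and let `g` be a `2n × 2n` matrix
over `K` with entries in `O_K = k[[t]]`, entries strictly below the diagonal in `t·O_K`,
and `det g ∈ O_K^×`.  If `gᵀ J g = c J` for some `c ∈ K^×`, then `c^n = det g`.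
(Membership in `O_K` and `t·O_K` and unit-ness are expressed via the order of a Laurent
series: `x ∈ tᵐ·O_K` iff `x = 0` or `m ≤ ord x`, and nonzero `x ∈ O_K^×` iff
`ord x = 0`.) -/
theorem stabilizer_in_identity_component (k : Type*) [Field k] (hk2 : (2 : k) ≠ 0)
    (n : ℕ) (hn : 2 ≤ n)
    (g : Matrix (Fin (2*n)) (Fin (2*n)) (LaurentSeries k))
    (hOK : ∀ i j, g i j = 0 ∨ 0 ≤ (g i j).order)
    (hbelow : ∀ i j : Fin (2*n), j < i → (g i j = 0 ∨ 1 ≤ (g i j).order))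
    (hdet_ne : g.det ≠ 0) (hdet_unit : (g.det).order = 0)
    (c : LaurentSeries k) (hc : c ≠ 0)
    (hsim : gᵀ * Jmat k n * g = c • Jmat k n) :
    c ^ n = g.det :=
  stabilizer_in_identity_component_general k hk2 n hn g hOK hbelow hdet_ne hdet_unit c hsim

end OrthLM
end

section
/- For every 1 ≤ i ≤ n, the set E_i ∩ A_i (which indexes the image of F_i in F_{2n−i} under the structure maps of the chain) is totally isotropic; that is, (E_i ∩ A_i) ∩ (E_i ∩ A_i)* = ∅. -/
open Finset

namespace OrthLM

/-- The star operation `E* = {i* : i ∈ E}` with `i* = 2n+1-i` (0-indexed: `Fin.rev`). -/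
def fstar {N : ℕ} (E : Finset (Fin N)) : Finset (Fin N) := E.image Fin.rev

/-- The perp operation `E^⊥ = (Eᶜ)* = (E*)ᶜ`. -/
def fperp {N : ℕ} (E : Finset (Fin N)) : Finset (Fin N) := fstar Eᶜ

/-- The set `A_i = {1,…,i} ∪ {i*,…,2n}` (0-indexed: `{j : j < i or 2n - i ≤ j}`). -/
def Aset (n : ℕ) (i : ℕ) : Finset (Fin (2*n)) :=
  univ.filter fun j => (j:ℕ) < i ∨ 2*n - i ≤ (j:ℕ)

/-- For a T-fixed point of the naive local model, encoded by subsets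
`E_0, …, E_{2n}` of `{1,…,2n}` (each of cardinality `n`, with `E_{i-1} ∖ {i} ⊆ E_i`,
`E_{2n} = E_0`, and `E_{2n-i} = E_i^⊥`), for every `1 ≤ i ≤ n` the set `E_i ∩ A_i` is
totally isotropic: `(E_i ∩ A_i) ∩ (E_i ∩ A_i)* = ∅`. -/
theorem image_totally_isotropic (n : ℕ) (hn : 2 ≤ n) (E : ℕ → Finset (Fin (2*n)))
    (hcard : ∀ i ≤ 2*n, (E i).card = n)
    (hchain : ∀ i : Fin (2*n), E (i:ℕ) \ {i} ⊆ E ((i:ℕ) + 1))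
    (hper : E (2*n) = E 0)
    (hdual : ∀ i ≤ 2*n, E (2*n - i) = fperp (E i)) :
    ∀ i : ℕ, 1 ≤ i → i ≤ n →
      (E i ∩ Aset n i) ∩ fstar (E i ∩ Aset n i) = ∅ := by
  intro i hi1 hin
  have hi2n : i ≤ 2 * n := by omega
  -- elements of A_i survive from E i to E (2n - i)
  have key : ∀ m, i ≤ m → m ≤ 2 * n - i → ∀ j : Fin (2 * n),
      ((j : ℕ) < i ∨ 2 * n - i ≤ (j : ℕ)) → j ∈ E i → j ∈ E m := by
    intro m him
    induction m, him using Nat.le_induction with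
    | base => intro _ j _ h; exact h
    | succ m hm ih =>
      intro hmle j hA hj
      have hmem : j ∈ E m := ih (by omega) j hA hj
      have hstep := hchain ⟨m, by omega⟩
      apply hstep
      refine Finset.mem_sdiff.mpr ⟨hmem, ?_⟩
      simp only [Finset.mem_singleton]
      intro heq
      have : (j : ℕ) = m := by rw [heq]
      omega
  ext j
  simp only [Finset.mem_inter, notMem_empty, iff_false]
  rintro ⟨⟨hjE, hjA⟩, hjs⟩
  have hrev : j.rev ∈ E i := by
    rcases Finset.mem_image.mp hjs with ⟨a, ha, hae⟩
    have ha' : a = j.rev := by rw [← hae, Fin.rev_rev]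
    rw [ha'] at ha
    exact (Finset.mem_inter.mp ha).1
  have hjA' : (j : ℕ) < i ∨ 2 * n - i ≤ (j : ℕ) :=
    (Finset.mem_filter.mp hjA).2
  have hdj : j ∉ E (2 * n - i) := by
    rw [hdual i hi2n]
    intro hmem
    rcases Finset.mem_image.mp hmem with ⟨a, ha, hae⟩
    have ha' : a = j.rev := by rw [← hae, Fin.rev_rev]
    rw [ha'] at ha
    exact (Finset.mem_compl.mp ha) hrev
  exact hdj (key (2 * n - i) (by omega) le_rfl j hjA' hjE)

end OrthLM
end

section
/- For every 0 ≤ i ≤ n, #(E_i ∩ A_i) ≤ i. -/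
open Finset

namespace OrthLM

lemma mem_fperp {N : ℕ} (F : Finset (Fin N)) (j : Fin N) : j ∈ fperp F ↔ j.rev ∉ F := by
  simp only [fperp, fstar, mem_image, mem_compl]
  constructor
  · rintro ⟨a, ha, rfl⟩; rwa [Fin.rev_rev]
  · intro h; exact ⟨j.rev, h, Fin.rev_rev j⟩

/-- For a T-fixed point of the naive local model, encoded by subsets
`E_0, …, E_{2n}` as in the context, `#(E_i ∩ A_i) ≤ i` for every `0 ≤ i ≤ n`. -/
theorem card_inter_le (n : ℕ) (hn : 2 ≤ n) (E : ℕ → Finset (Fin (2*n)))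
    (hcard : ∀ i ≤ 2*n, (E i).card = n)
    (hchain : ∀ i : Fin (2*n), E (i:ℕ) \ {i} ⊆ E ((i:ℕ) + 1))
    (hper : E (2*n) = E 0)
    (hdual : ∀ i ≤ 2*n, E (2*n - i) = fperp (E i)) :
    ∀ i ≤ n, (E i ∩ Aset n i).card ≤ i := by
  intro i hi
  set L : Finset (Fin (2*n)) := univ.filter (fun j => (j:ℕ) < i) with hL
  set H : Finset (Fin (2*n)) := univ.filter (fun j => 2*n - i ≤ (j:ℕ)) with hH
  have hiN : i ≤ 2*n - i := by omega
  -- duality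
  have hd : E i = fperp (E (2*n - i)) := by
    have := hdual (2*n - i) (by omega)
    rwa [show 2*n - (2*n - i) = i by omega] at this
  have hmem : ∀ j : Fin (2*n), j ∈ E i ↔ j.rev ∉ E (2*n - i) := by
    intro j; rw [hd, mem_fperp]
  -- split
  have hsplit : E i ∩ Aset n i = (E i ∩ L) ∪ (E i ∩ H) := by
    ext j; simp [Aset, hL, hH, and_or_left]
  have hdisj : Disjoint (E i ∩ L) (E i ∩ H) := by
    rw [Finset.disjoint_left]
    intro j hj hj'
    simp only [hL, hH, mem_inter, mem_filter, mem_univ, true_and] at hj hj'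
    omega
  -- card L = i
  have hLcard : L.card = i := by
    have h1 : L = (Finset.range i).attachFin (fun m hm => by
        rw [Finset.mem_range] at hm; omega) := by
      ext j
      simp [hL, Finset.mem_attachFin]
    rw [h1, Finset.card_attachFin, Finset.card_range]
  -- monotonicity: E i ∩ L ⊆ E m for i ≤ m ≤ 2n
  have hmono : ∀ m, i ≤ m → m ≤ 2*n → E i ∩ L ⊆ E m := by
    intro m
    induction m with
    | zero => intro h1 h2; have : i = 0 := by omega
              subst this; exact Finset.inter_subset_left
    | succ m ih =>
      intro h1 h2
      rcases Nat.lt_or_ge m i with hc | hc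
      · have : i = m + 1 := by omega
        subst this; exact Finset.inter_subset_left
      · intro x hx
        have hxm : x ∈ E m := ih hc (by omega) hx
        have hlt : (x:ℕ) < i := by
          have := (Finset.mem_inter.1 hx).2
          simp only [hL, mem_filter] at this; exact this.2
        have := hchain ⟨m, by omega⟩
        simp only at this
        apply this
        rw [Finset.mem_sdiff]
        refine ⟨hxm, ?_⟩
        simp only [Finset.mem_singleton]
        intro hxe
        have : (x:ℕ) = m := by rw [hxe]
        omega
  have hsub : E i ∩ L ⊆ E (2*n - i) ∩ L :=
    Finset.subset_inter (fun x hx => hmono (2*n - i) hiN (by omega) hx)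
      Finset.inter_subset_right
  -- image of E i ∩ H under rev
  have himg : Finset.image Fin.rev (E i ∩ H) = L \ E (2*n - i) := by
    ext k
    simp only [mem_image, mem_sdiff, hL, hH, mem_inter, mem_filter, mem_univ, true_and]
    constructor
    · rintro ⟨a, ⟨ha, hha⟩, rfl⟩
      have hva : (a:ℕ) < 2*n := a.isLt
      have hrv : (a.rev : ℕ) = 2*n - 1 - a := by simp [Fin.rev]; omega
      refine ⟨by omega, ?_⟩
      rw [hmem a] at ha
      exact ha
    · rintro ⟨hk, hkE⟩
      refine ⟨k.rev, ⟨?_, ?_⟩, Fin.rev_rev k⟩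
      · rw [hmem, Fin.rev_rev]; exact hkE
      · have hvk : (k:ℕ) < 2*n := k.isLt
        have : (k.rev : ℕ) = 2*n - 1 - k := by simp [Fin.rev]; omega
        omega
  have hHcard : (E i ∩ H).card = (L \ E (2*n - i)).card := by
    rw [← himg, Finset.card_image_of_injective _ Fin.rev_injective]
  have h1 : (L ∩ E (2*n - i)).card + (L \ E (2*n - i)).card = L.card :=
    Finset.card_inter_add_card_sdiff L (E (2*n - i))
  have h2 : (E i ∩ L).card ≤ (E (2*n - i) ∩ L).card := Finset.card_le_card hsub
  rw [hsplit, Finset.card_union_of_disjoint hdisj]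
  rw [Finset.inter_comm (E (2*n-i)) L] at h2
  omega

end OrthLM
end

section
/- Let E, E' ⊆ {1,…,2n} satisfy E = E^⊥ and E' = E'^⊥ (so #E = #E' = n, and the coordinate subspaces they span are maximal totally isotropic for the split symmetric form). Then there exists σ ∈ W° with σ(E) = E' if and only if #(E ∖ E') is even. -/
open Finset

namespace OrthLM

/-- Membership in `S^h_{2n}`: permutations commuting with `i ↦ i*`. -/
def inSh (n : ℕ) (σ : Equiv.Perm (Fin (2*n))) : Prop :=
  ∀ i, σ i.rev = (σ i).rev

/-- Membership in `W°`: elements of `S^h_{2n}` that are even as permutations. -/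
def inW0 (n : ℕ) (σ : Equiv.Perm (Fin (2*n))) : Prop :=
  inSh n σ ∧ Equiv.Perm.sign σ = 1

/-!
Write `ρ` for `i ↦ i*`. A set `E` with `E = E^⊥` contains exactly one point of each pair
`{i, ρ i}`. Swapping `i` and `ρ i` for every `i ∈ E ∖ E'` (i.e. applying `ρ` on `E ∆ E'`) gives an
element of `S^h_{2n}` carrying `E` onto `E'`, of sign `(-1)^#(E ∖ E')`. Any other such element
differs from it by some `τ ∈ S^h_{2n}` stabilizing `E`, and `τ` is even: if `a` is `τ` on `E` and
the identity elsewhere, then `τ = a · ρ a ρ⁻¹`.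
-/

open Equiv Equiv.Perm

section flipOn

variable {α : Type*} [DecidableEq α]

lemma image_eq_of_apply_mem_iff {σ : Perm α} {s t : Finset α} (h : ∀ i, σ i ∈ t ↔ i ∈ s) :
    s.image σ = t := by
  ext j
  obtain ⟨i, rfl⟩ := σ.surjective j
  rw [σ.injective.mem_finset_image, h]

def flipOn (ρ : Perm α) (D : Finset α) (hD : ∀ i, ρ i ∈ D ↔ i ∈ D) : Perm α :=
  ofSubtype (ρ.subtypePerm hD)

variable {ρ : Perm α} {D : Finset α} (hD : ∀ i, ρ i ∈ D ↔ i ∈ D)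

lemma flipOn_apply (i : α) : flipOn ρ D hD i = if i ∈ D then ρ i else i := by
  split_ifs with hi
  · rw [flipOn, ofSubtype_apply_of_mem _ hi, subtypePerm_apply]
  · rw [flipOn, ofSubtype_apply_of_not_mem _ hi]

lemma commute_flipOn : Commute (flipOn ρ D hD) ρ := by
  ext i
  simp only [mul_apply, flipOn_apply, hD]
  split_ifs <;> rfl

lemma flipOn_sq (hρ : Function.Involutive ρ) : flipOn ρ D hD ^ 2 = 1 := by
  ext i
  by_cases hi : i ∈ D <;> simp [sq, flipOn_apply, hi, hD, hρ i]

variable [Fintype α]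

lemma sign_eq_neg_one_pow_of_sq_eq_one {σ : Perm α} (hσ : σ ^ 2 = 1) :
    sign σ = (-1) ^ (#σ.support / 2) := by
  rw [sign_of_pow_two_eq_one hσ, card_fixedPoints, sum_cycleType,
    Nat.sub_sub_self (card_le_univ _)]

lemma support_flipOn (hfix : ∀ i ∈ D, ρ i ≠ i) : (flipOn ρ D hD).support = D := by
  ext i
  rw [mem_support, flipOn_apply]
  split_ifs with hi <;> simp [hi, hfix]

lemma sign_flipOn (hρ : Function.Involutive ρ) (hfix : ∀ i ∈ D, ρ i ≠ i) :
    sign (flipOn ρ D hD) = (-1) ^ (#D / 2) := by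
  rw [sign_eq_neg_one_pow_of_sq_eq_one (flipOn_sq hD hρ), support_flipOn hD hfix]

end flipOn

section Lagrangian

variable {α : Type*}

/-- For `ρ = Fin.rev` this is the condition `E = E^⊥`. -/
def IsLagrangian (ρ : Perm α) (E : Finset α) : Prop := ∀ i, i ∈ E ↔ ρ i ∉ E

variable {ρ : Perm α} {E E' : Finset α}

lemma IsLagrangian.apply_mem_iff (hE : IsLagrangian ρ E) (i : α) : ρ i ∈ E ↔ i ∉ E := by
  rw [hE i, not_not]

lemma IsLagrangian.inv_apply_mem_iff (hE : IsLagrangian ρ E) (i : α) : ρ⁻¹ i ∈ E ↔ i ∉ E := by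
  rw [hE, coe_inv, apply_symm_apply]

lemma IsLagrangian.apply_ne (hE : IsLagrangian ρ E) (i : α) : ρ i ≠ i := fun h ↦ by
  simpa [h] using hE i

variable [DecidableEq α]

lemma IsLagrangian.apply_mem_symmDiff_iff (hE : IsLagrangian ρ E) (hE' : IsLagrangian ρ E')
    (i : α) : ρ i ∈ symmDiff E E' ↔ i ∈ symmDiff E E' := by
  simp only [mem_symmDiff, hE.apply_mem_iff, hE'.apply_mem_iff]
  tauto

lemma IsLagrangian.card_sdiff_comm (hE : IsLagrangian ρ E) (hE' : IsLagrangian ρ E') :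
    #(E \ E') = #(E' \ E) := by
  rw [← card_map ρ.toEmbedding]
  congr 1
  ext i
  simp only [mem_map_equiv, mem_sdiff, ← coe_inv, hE.inv_apply_mem_iff, hE'.inv_apply_mem_iff]
  tauto

lemma IsLagrangian.card_symmDiff (hE : IsLagrangian ρ E) (hE' : IsLagrangian ρ E') :
    #(symmDiff E E') = 2 * #(E \ E') := by
  rw [symmDiff_def, sup_eq_union, card_union_of_disjoint disjoint_sdiff_sdiff,
    ← hE.card_sdiff_comm hE', two_mul]

lemma IsLagrangian.flipOn_symmDiff_mem_iff (hE : IsLagrangian ρ E) (hE' : IsLagrangian ρ E')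
    (i : α) : flipOn ρ (symmDiff E E') (hE.apply_mem_symmDiff_iff hE') i ∈ E' ↔ i ∈ E := by
  rw [flipOn_apply]
  split_ifs with hi <;> rw [mem_symmDiff] at hi
  · rw [hE'.apply_mem_iff]
    tauto
  · tauto

variable [Fintype α]

theorem IsLagrangian.sign_eq_one (hE : IsLagrangian ρ E) {τ : Perm α} (hτρ : Commute τ ρ)
    (hτE : ∀ i, τ i ∈ E ↔ i ∈ E) : sign τ = 1 := by
  set a := ofSubtype (τ.subtypePerm hτE)
  have hdecomp : τ = a * (ρ * a * ρ⁻¹) := by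
    ext i
    simp only [mul_apply]
    by_cases hi : i ∈ E
    · have : ρ⁻¹ i ∉ E := by rw [hE.inv_apply_mem_iff, not_not]; exact hi
      rw [ofSubtype_apply_of_not_mem _ this, coe_inv, apply_symm_apply,
        ofSubtype_apply_of_mem _ hi, subtypePerm_apply]
    · have h₁ : ρ⁻¹ i ∈ E := (hE.inv_apply_mem_iff i).2 hi
      have h₂ : τ i ∉ E := (hτE i).not.2 hi
      have hcomm : ρ (τ (ρ⁻¹ i)) = τ i := by
        rw [← mul_apply ρ, ← hτρ.eq, mul_apply, coe_inv, apply_symm_apply]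
      rw [ofSubtype_apply_of_mem _ h₁, subtypePerm_apply, hcomm, ofSubtype_apply_of_not_mem _ h₂]
  rw [hdecomp, map_mul, map_mul, map_mul, map_inv, mul_inv_cancel_comm, Int.units_mul_self]

theorem IsLagrangian.sign_eq_of_image_eq (hE : IsLagrangian ρ E) {σ σ' : Perm α}
    (hσ : Commute σ ρ) (hσ' : Commute σ' ρ) (himage : E.image σ = E.image σ') :
    sign σ = sign σ' := by
  have hτE : ∀ i, (σ'⁻¹ * σ) i ∈ E ↔ i ∈ E := fun i ↦ by
    rw [mul_apply, ← σ'.injective.mem_finset_image, coe_inv, apply_symm_apply, ← himage,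
      σ.injective.mem_finset_image]
  have := hE.sign_eq_one (hσ'.inv_left.mul_left hσ) hτE
  rwa [map_mul, map_inv, inv_mul_eq_one, eq_comm] at this

theorem IsLagrangian.exists_perm_image_eq (hρ : Function.Involutive ρ) (hE : IsLagrangian ρ E)
    (hE' : IsLagrangian ρ E') :
    ∃ σ : Perm α, Commute σ ρ ∧ E.image σ = E' ∧ sign σ = (-1) ^ #(E \ E') := by
  refine ⟨_, commute_flipOn _, image_eq_of_apply_mem_iff (hE.flipOn_symmDiff_mem_iff hE'), ?_⟩
  rw [sign_flipOn _ hρ fun i _ ↦ hE.apply_ne i, hE.card_symmDiff hE',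
    Nat.mul_div_cancel_left _ two_pos]

end Lagrangian

lemma isLagrangian_revPerm_of_eq_fperp {N : ℕ} {E : Finset (Fin N)} (hE : E = fperp E) :
    IsLagrangian Fin.revPerm E := fun i ↦ by
  conv_lhs => rw [hE]
  simp [fperp, fstar, Fin.rev_eq_iff]

lemma inSh_iff_commute {n : ℕ} {σ : Perm (Fin (2 * n))} :
    inSh n σ ↔ Commute σ Fin.revPerm :=
  ⟨fun h ↦ Equiv.ext h, fun h i ↦ DFunLike.congr_fun h i⟩

theorem lagrangian_conjugate_iff_even_general (n : ℕ)
    (E E' : Finset (Fin (2*n))) (hE : E = fperp E) (hE' : E' = fperp E') :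
    (∃ σ : Equiv.Perm (Fin (2*n)), inW0 n σ ∧ E.image (fun x => σ x) = E') ↔
      Even (E \ E').card := by
  have hL := isLagrangian_revPerm_of_eq_fperp hE
  obtain ⟨σ₀, hσ₀, himage₀, hsign₀⟩ :=
    hL.exists_perm_image_eq Fin.rev_involutive (isLagrangian_revPerm_of_eq_fperp hE')
  rw [← neg_one_pow_eq_one_iff_even (by decide : (-1 : ℤˣ) ≠ 1), ← hsign₀]
  constructor
  · rintro ⟨σ, ⟨hσ, hsign⟩, himage⟩
    rw [← hsign]
    exact (hL.sign_eq_of_image_eq (inSh_iff_commute.1 hσ) hσ₀ (himage.trans himage₀.symm)).symm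
  · exact fun h ↦ ⟨σ₀, ⟨inSh_iff_commute.2 hσ₀, h⟩, himage₀⟩

/-- Let `E, E' ⊆ {1,…,2n}` with `E = E^⊥`, `E' = E'^⊥`.  Then there is
`σ ∈ W°` with `σ(E) = E'` iff `#(E ∖ E')` is even. -/
theorem lagrangian_conjugate_iff_even (n : ℕ) (hn : 2 ≤ n)
    (E E' : Finset (Fin (2*n))) (hE : E = fperp E) (hE' : E' = fperp E') :
    (∃ σ : Equiv.Perm (Fin (2*n)), inW0 n σ ∧ E.image (fun x => σ x) = E') ↔
      Even (E \ E').card :=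
  lagrangian_conjugate_iff_even_general n E E' hE hE'

end OrthLM
end

section
/- Let w ∈ W̃ be GL-permissible and let i, j ∈ {1,…,2n} with j ∉ {i, i*}. Then: [either i < j and s_{i,j;0}w is GL-permissible, or j < i and s_{j,i;−1}w is GL-permissible] if and only if [the class of i mod 2n lies in K_j and the class of j−1 mod 2n does not lie in K_i]. -/
open Finset

namespace OrthLM

/-- Membership in the cocharacter lattice `X` of the standard maximal torus of `GO_{2n}`:
integer vectors with `r_i + r_{i*}` independent of `i`. -/
def inX (n : ℕ) (v : Fin (2*n) → ℤ) : Prop :=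
  ∀ i j : Fin (2*n), v i + v i.rev = v j + v j.rev

/-- Elements of the ambient group of the Iwahori-Weyl group `W̃ = X ⋊ S^h_{2n}`,
represented as pairs (translation part, finite part). -/
abbrev Wt (n : ℕ) := (Fin (2*n) → ℤ) × Equiv.Perm (Fin (2*n))

/-- Membership in the Iwahori-Weyl group `W̃ = X ⋊ S^h_{2n}`. -/
def inWt (n : ℕ) (w : Wt n) : Prop := inX n w.1 ∧ inSh n w.2

def wone (n : ℕ) : Wt n := (0, 1)

/-- Multiplication in `W̃` (compatible with the affine action `(v,σ)·x = v + σx`). -/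
def wmul (n : ℕ) (w w' : Wt n) : Wt n :=
  (fun i => w.1 i + w'.1 (w.2⁻¹ i), w.2 * w'.2)

/-- Inversion in `W̃`. -/
def winv (n : ℕ) (w : Wt n) : Wt n := (fun i => -(w.1 (w.2 i)), w.2⁻¹)

/-- The translation element `t_μ`. -/
def wtrans (n : ℕ) (μ : Fin (2*n) → ℤ) : Wt n := (μ, 1)

/-- A finite Weyl group element regarded in `W̃`. -/
def wperm (n : ℕ) (σ : Equiv.Perm (Fin (2*n))) : Wt n := (0, σ)

/-- The affine action of `W̃` on `ℤ^{2n}`: `(v,σ)·x = v + σx` with `(σx)(i) = x(σ⁻¹ i)`. -/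
def wact (n : ℕ) (w : Wt n) (x : Fin (2*n) → ℤ) : Fin (2*n) → ℤ :=
  fun i => w.1 i + x (w.2⁻¹ i)

/-- The affine action of `W̃` on `ℝ^{2n}`. -/
def wactR (n : ℕ) (w : Wt n) (x : Fin (2*n) → ℝ) : Fin (2*n) → ℝ :=
  fun i => (w.1 i : ℝ) + x (w.2⁻¹ i)

/-- The action of a permutation on vectors: `(σμ)(i) = μ(σ⁻¹ i)`. -/
def permAct (n : ℕ) (σ : Equiv.Perm (Fin (2*n))) (μ : Fin (2*n) → ℤ) : Fin (2*n) → ℤ :=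
  fun i => μ (σ⁻¹ i)

/-- The cocharacter `μ₁ = (1^{(n)}, 0^{(n)})`. -/
def mu1 (n : ℕ) : Fin (2*n) → ℤ := fun j => if (j:ℕ) < n then 1 else 0

/-- The cocharacter `μ₂ = (1^{(n-1)}, 0, 1, 0^{(n-1)})`. -/
def mu2 (n : ℕ) : Fin (2*n) → ℤ := fun j => if (j:ℕ) < n - 1 ∨ (j:ℕ) = n then 1 else 0

/-- The vertices `ω_k = ((-1)^{(k)}, 0^{(2n-k)})` of the standard extended alcove. -/
def om (n : ℕ) (k : ℕ) : Fin (2*n) → ℤ := fun j => if (j:ℕ) < k then -1 else 0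

/-- The extended alcove `v_k = w·ω_k` of `w`. -/
def valc (n : ℕ) (w : Wt n) (k : ℕ) : Fin (2*n) → ℤ := wact n w (om n k)

/-- The vector `μ_k^w = v_k - ω_k`. -/
def muk (n : ℕ) (w : Wt n) (k : ℕ) : Fin (2*n) → ℤ :=
  fun j => valc n w k j - om n k j

/-- The set `E_k^w = {j : μ_k^w(j) = 0}`. -/
def Ew (n : ℕ) (w : Wt n) (k : ℕ) : Finset (Fin (2*n)) :=
  univ.filter fun j => muk n w k j = 0

/-- `GL`-permissibility: `Σ v_0 = n` and `ω_k ≤ v_k ≤ ω_k + (1,…,1)` for `0 ≤ k ≤ 2n-1`. -/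
def GLperm (n : ℕ) (w : Wt n) : Prop :=
  (∑ j, valc n w 0 j) = (n : ℤ) ∧
  ∀ k < 2*n, ∀ j, om n k j ≤ valc n w k j ∧ valc n w k j ≤ om n k j + 1

/-- A vector `μ ∈ {0,1}^{2n}` is totally isotropic if `μ(j) + μ(j*) = 1` for all `j`. -/
def TotIso (n : ℕ) (μ : Fin (2*n) → ℤ) : Prop := ∀ j, μ j + μ j.rev = 1

/-- `μ`-spin-permissibility: `GL`-permissible and every totally isotropic `μ_k^w`
(for `0 ≤ k ≤ n`) lies in the `W°`-orbit of `μ`. -/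
def SpinPerm (n : ℕ) (μ : Fin (2*n) → ℤ) (w : Wt n) : Prop :=
  GLperm n w ∧ ∀ k ≤ n, TotIso n (muk n w k) →
    ∃ σ, inW0 n σ ∧ muk n w k = permAct n σ μ

/-- Membership in the coroot lattice `Q^∨`. -/
def inQv (n : ℕ) (v : Fin (2*n) → ℤ) : Prop :=
  inX n v ∧ (∀ i, v i + v i.rev = 0) ∧
  Even (∑ i ∈ univ.filter (fun i : Fin (2*n) => (i:ℕ) < n), v i)

/-- Membership in the affine Weyl group `W_a = Q^∨ ⋊ W°`. -/
def inWa (n : ℕ) (x : Wt n) : Prop := inQv n x.1 ∧ inW0 n x.2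

/-- The affine reflection `s_{i,j;d}` (for `j ∉ {i, i*}`), sending `x` to the vector with
`x_j + d` in slot `i`, `x_i - d` in slot `j`, `x_{i*} + d` in slot `j*`, `x_{j*} - d` in
slot `i*`. -/
def wrefl (n : ℕ) (i j : Fin (2*n)) (d : ℤ) : Wt n :=
  (fun l => if l = i then d else if l = j then -d else if l = j.rev then d
            else if l = i.rev then -d else 0,
   Equiv.swap i j * Equiv.swap i.rev j.rev)

/-- Successor modulo `2n` on representatives `{0,…,2n-1}` of `ℤ/2nℤ`. -/
def csucc (n : ℕ) (k : Fin (2*n)) : Fin (2*n) :=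
  ⟨((k:ℕ) + 1) % (2*n), Nat.mod_lt _ k.pos⟩

/-- Predecessor modulo `2n`. -/
def cpred (n : ℕ) (k : Fin (2*n)) : Fin (2*n) :=
  ⟨((k:ℕ) + (2*n - 1)) % (2*n), Nat.mod_lt _ k.pos⟩

/-- Negation modulo `2n`. -/
def cneg (n : ℕ) (k : Fin (2*n)) : Fin (2*n) :=
  ⟨(2*n - (k:ℕ)) % (2*n), Nat.mod_lt _ k.pos⟩

/-- The star involution on classes mod `2n`: the class of `m` goes to the class of
`m* = 2n+1-m`, i.e. `c ↦ 1 - c`. -/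
def cstar (n : ℕ) (k : Fin (2*n)) : Fin (2*n) := csucc n (cneg n k)

/-- The representative in `{1,…,2n}` of a class mod `2n`. -/
def pv (n : ℕ) (k : Fin (2*n)) : ℕ := if (k:ℕ) = 0 then 2*n else (k:ℕ)

/-- The cyclic interval `[a, b)` in `ℤ/2nℤ`. -/
def cyc (n : ℕ) (a b : Fin (2*n)) : Finset (Fin (2*n)) :=
  univ.filter fun k => ((k:ℕ) + 2*n - (a:ℕ)) % (2*n) < ((b:ℕ) + 2*n - (a:ℕ)) % (2*n)

/-- The set `K_m = {k ∈ ℤ/2nℤ : μ_k^w(m) = 0}` (indices `m` are 0-indexed: the slot `m`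
corresponds to the paper's `m+1 ∈ {1,…,2n}`; classes are represented by `{0,…,2n-1}`). -/
def Kset (n : ℕ) (w : Wt n) (m : Fin (2*n)) : Finset (Fin (2*n)) :=
  univ.filter fun k => muk n w (k:ℕ) m = 0

/-- The slot `m` is proper: `K_{m+1}` (paper indexing) is a cyclic interval `[m̃, m+1)`
with lower endpoint `m̃` different from the class of `m+1`. -/
def isProper (n : ℕ) (w : Wt n) (m : Fin (2*n)) : Prop :=
  ∃ mt, mt ≠ csucc n m ∧ Kset n w m = cyc n mt (csucc n m)

/-- The constraint cutting out `X ⊗ ℝ` inside `ℝ^{2n}`. -/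
def inXR (n : ℕ) (x : Fin (2*n) → ℝ) : Prop :=
  ∀ i j : Fin (2*n), x i + x i.rev = x j + x j.rev

/-- The closure (in `X ⊗ ℝ`, lifted to `ℝ^{2n}`) of the preimage `Ã` of the base alcove:
the points of `X ⊗ ℝ` on which every positive root `x_i - x_j`, `x_i + x_j - c(x)`
(`1 ≤ i < j ≤ n`) takes values in `[-1, 0]`. -/
def ClA (n : ℕ) : Set (Fin (2*n) → ℝ) :=
  {x | inXR n x ∧
       ∀ i j : Fin (2*n), i < j → (j:ℕ) < n →
         (-1 ≤ x i - x j ∧ x i - x j ≤ 0 ∧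
          -1 ≤ x i + x j - (x i + x i.rev) ∧ x i + x j - (x i + x i.rev) ≤ 0)}

/-- The stabilizer `Ω` in `W̃` of the base alcove. -/
def inOmega (n : ℕ) (w : Wt n) : Prop :=
  inWt n w ∧ (wactR n w) '' ClA n = ClA n

/-- The Coxeter generators of `W_a`: the reflections in the walls of the base alcove,
namely `s_{i,i+1;0}` for `1 ≤ i ≤ n-1`, `s_{n-1,n+1;0}`, and `s_{1,2n-1;-1}`
(paper 1-indexed; here 0-indexed). -/
def sgens (n : ℕ) (hn : 2 ≤ n) : Set (Wt n) :=
  {w | (∃ i : Fin (2*n), (i:ℕ) + 1 < n ∧ w = wrefl n i (csucc n i) 0) ∨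
       w = wrefl n ⟨n-2, by omega⟩ ⟨n, by omega⟩ 0 ∨
       w = wrefl n ⟨0, by omega⟩ ⟨2*n-2, by omega⟩ (-1)}

def wprod (n : ℕ) (L : List (Wt n)) : Wt n := L.foldr (wmul n) (wone n)

/-- A word in the Coxeter generators of `W_a`. -/
def isWord (n : ℕ) (hn : 2 ≤ n) (L : List (Wt n)) : Prop := ∀ s ∈ L, s ∈ sgens n hn

/-- The length function on `W̃`: `ℓ(xω) = ℓ(x)` for `x ∈ W_a`, `ω ∈ Ω`, where `ℓ(x)` is
the minimal length of a word in the Coxeter generators expressing `x`. -/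
noncomputable def lenW (n : ℕ) (hn : 2 ≤ n) (w : Wt n) : ℕ :=
  sInf {m | ∃ L ω, isWord n hn L ∧ L.length = m ∧ inOmega n ω ∧ w = wmul n (wprod n L) ω}

/-- The Bruhat order on `W̃`: `xω ≤ x'ω'` iff `ω = ω'` and `x ≤ x'` in `W_a`, the latter
expressed by the subword property for a reduced word of `x'`. -/
def wle (n : ℕ) (hn : 2 ≤ n) (w w' : Wt n) : Prop :=
  ∃ L ω, isWord n hn L ∧ inOmega n ω ∧ w' = wmul n (wprod n L) ω ∧
    L.length = lenW n hn w' ∧ ∃ L', L'.Sublist L ∧ w = wmul n (wprod n L') ω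

/-- Strict Bruhat order on `W̃`. -/
def wlt (n : ℕ) (hn : 2 ≤ n) (w w' : Wt n) : Prop := wle n hn w w' ∧ w ≠ w'

/-- The `μ`-admissible set `Adm°(μ)` for `G°`: `w ≤ σ t_μ σ⁻¹` for some `σ ∈ W°`. -/
def AdmO (n : ℕ) (hn : 2 ≤ n) (μ : Fin (2*n) → ℤ) (w : Wt n) : Prop :=
  ∃ σ, inW0 n σ ∧
    wle n hn w (wmul n (wperm n σ) (wmul n (wtrans n μ) (wperm n σ⁻¹)))

/-- The `μ`-admissible set `Adm(μ)` for `G`: `w ≤ σ t_μ σ⁻¹` for some `σ ∈ S^h_{2n}`. -/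
def AdmFull (n : ℕ) (hn : 2 ≤ n) (μ : Fin (2*n) → ℤ) (w : Wt n) : Prop :=
  ∃ σ, inSh n σ ∧
    wle n hn w (wmul n (wperm n σ) (wmul n (wtrans n μ) (wperm n σ⁻¹)))

/-- The element `τ = (n, n+1) ∈ S^h_{2n}` (paper 1-indexed). -/
def tau (n : ℕ) (hn : 2 ≤ n) : Equiv.Perm (Fin (2*n)) :=
  Equiv.swap ⟨n-1, by omega⟩ ⟨n, by omega⟩

/-!
Write `μ_k` for `μ_k^w`, with `k` read modulo `2n`. GL-permissibility says `μ_k ∈ {0,1}^{2n}`,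
and as `k` increases by one, `μ_k(m)` can increase only when `k ≡ m`. Since
`s_{j,i;-1} = s_{i,j;1}`, both cases concern `r = s_{i,j;d}` with `d = 0` for `i < j` and `d = 1`
for `j < i`. Then `μ^{rw}_k(i) = μ_k(j) + c_k` and `μ^{rw}_k(j) = μ_k(i) - c_k`, where `c_k` is
the indicator of the cyclic interval `(i, j]`, while the slots `i*`, `j*` mirror this through
`μ_k(m*) = 1 - μ_{-k}(m)` and all other slots are unchanged. Hence `rw` is GL-permissible iff
`μ_k(j) = 0` and `μ_k(i) = 1` for all `k ∈ (i, j]`. Neither slot can increase inside this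
interval, so this holds iff `μ_{i+1}(j) = 0` and `μ_j(i) = 1`, i.e. `i + 1 ∈ K_j` and
`j ∉ K_i`.
-/

section Alcove

variable {n : ℕ}

lemma muk_apply (w : Wt n) (k : ℕ) (m : Fin (2*n)) :
    muk n w k m = w.1 m - (if ((w.2⁻¹ m : Fin (2*n)) : ℕ) < k then 1 else 0)
      + (if (m : ℕ) < k then 1 else 0) := by
  simp only [muk, valc, wact, om]; split_ifs <;> ring

lemma muk_succ (w : Wt n) (k : ℕ) (m : Fin (2*n)) :
    muk n w (k + 1) m = muk n w k m + (if (m : ℕ) = k then 1 else 0)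
      - (if ((w.2⁻¹ m : Fin (2*n)) : ℕ) = k then 1 else 0) := by
  simp only [muk_apply]; split_ifs <;> omega

lemma muk_two_mul (w : Wt n) (m : Fin (2*n)) : muk n w (2*n) m = muk n w 0 m := by
  have := (w.2⁻¹ m).isLt
  simp only [muk_apply]; split_ifs <;> omega

lemma GLperm_iff_muk (w : Wt n) : GLperm n w ↔
    (∑ m, w.1 m) = n ∧ ∀ k < 2*n, ∀ m, 0 ≤ muk n w k m ∧ muk n w k m ≤ 1 := by
  simp only [GLperm, muk, valc, wact, om]
  refine and_congr (by simp) (forall₂_congr fun k _ => forall_congr' fun m => ?_)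
  omega

lemma muk_mod_bounds {w : Wt n} (hw : GLperm n w) (t : ℕ) (m : Fin (2*n)) :
    0 ≤ muk n w (t % (2*n)) m ∧ muk n w (t % (2*n)) m ≤ 1 :=
  ((GLperm_iff_muk w).1 hw).2 _ (Nat.mod_lt _ m.pos) m

lemma mem_Kset {w : Wt n} {m k : Fin (2*n)} : k ∈ Kset n w m ↔ muk n w k m = 0 := by
  simp [Kset]
lemma muk_mod_succ_le (w : Wt n) {t : ℕ} {m : Fin (2*n)} (htm : t % (2*n) ≠ m) :
    muk n w ((t + 1) % (2*n)) m ≤ muk n w (t % (2*n)) m := by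
  have htlt := Nat.mod_lt t m.pos
  have hmod : (t + 1) % (2*n) = (t % (2*n) + 1) % (2*n) := by
    rw [Nat.add_mod, Nat.mod_eq_of_lt (a := 1) (by omega)]
  rcases Nat.lt_or_ge (t % (2*n) + 1) (2*n) with hlt | hge
  · rw [hmod, Nat.mod_eq_of_lt hlt, muk_succ]
    split_ifs <;> omega
  · have hstep := muk_succ w (t % (2*n)) m
    rw [show t % (2*n) + 1 = 2*n by omega, muk_two_mul] at hstep
    rw [hmod, show t % (2*n) + 1 = 2*n by omega, Nat.mod_self, hstep]
    split_ifs <;> omega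

lemma muk_mod_antitoneOn (w : Wt n) {a b : ℕ} {m : Fin (2*n)}
    (hm : ∀ t, a ≤ t → t < b → t % (2*n) ≠ m) :
    AntitoneOn (fun t => muk n w (t % (2*n)) m) (Set.Icc a b) :=
  antitoneOn_of_add_one_le Set.ordConnected_Icc fun t _ ht ht1 =>
    muk_mod_succ_le w (hm t ht.1 (by have := ht1.2; omega))

lemma forall_Icc_muk_mod_iff {w : Wt n} (hw : GLperm n w) {a b : ℕ} (hab : a ≤ b)
    {p q : Fin (2*n)} (hp : ∀ t, a ≤ t → t < b → t % (2*n) ≠ p)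
    (hq : ∀ t, a ≤ t → t < b → t % (2*n) ≠ q) :
    (∀ t ∈ Set.Icc a b, muk n w (t % (2*n)) p = 0 ∧ muk n w (t % (2*n)) q = 1) ↔
      muk n w (a % (2*n)) p = 0 ∧ muk n w (b % (2*n)) q = 1 := by
  refine ⟨fun h => ⟨(h a ⟨le_rfl, hab⟩).1, (h b ⟨hab, le_rfl⟩).2⟩,
    fun ⟨hpa, hqb⟩ t ht => ?_⟩
  have hpt := muk_mod_antitoneOn w hp ⟨le_rfl, hab⟩ ht ht.1
  have hqt := muk_mod_antitoneOn w hq ht ⟨hab, le_rfl⟩ ht.2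
  have := muk_mod_bounds hw t p
  have := muk_mod_bounds hw t q
  simp only at hpt hqt
  omega

lemma sum_add_rev (v : Fin (2*n) → ℤ) : ∑ m, (v m + v m.rev) = 2 * ∑ m, v m := by
  rw [Finset.sum_add_distrib,
    Fintype.sum_equiv Fin.revPerm (fun m => v m.rev) v fun _ => rfl]
  ring

lemma add_rev_eq_one {v : Fin (2*n) → ℤ} (hv : inX n v) (hsum : ∑ m, v m = n)
    (m : Fin (2*n)) : v m + v m.rev = 1 := by
  have h := sum_add_rev v
  rw [Finset.sum_congr rfl fun l _ => hv l m, Finset.sum_const, Finset.card_univ,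
    Fintype.card_fin, hsum, nsmul_eq_mul] at h
  have : (0 : ℤ) < n := by have := m.pos; omega
  push_cast at h
  nlinarith

lemma sum_eq_of_add_rev_eq_one {v : Fin (2*n) → ℤ} (hv : ∀ m : Fin (2*n), v m + v m.rev = 1) :
    ∑ m, v m = n := by
  have h := sum_add_rev v
  simp only [hv, Finset.sum_const, Finset.card_univ, Fintype.card_fin, nsmul_eq_mul] at h
  push_cast at h
  linarith

lemma inSh.inv_apply_rev {σ : Equiv.Perm (Fin (2*n))} (hσ : inSh n σ) (m : Fin (2*n)) :
    σ⁻¹ m.rev = (σ⁻¹ m).rev := by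
  rw [Equiv.Perm.inv_eq_iff_eq, hσ]; simp

lemma inSh.mul {σ τ : Equiv.Perm (Fin (2*n))} (hσ : inSh n σ) (hτ : inSh n τ) :
    inSh n (σ * τ) := fun m => by simp only [Equiv.Perm.mul_apply, hτ m, hσ (τ m)]

lemma muk_rev {w : Wt n} (hsh : inSh n w.2) (hpair : ∀ m, w.1 m + w.1 m.rev = 1)
    {k : ℕ} (hk : k ≤ 2*n) (m : Fin (2*n)) :
    muk n w k m.rev = 1 - muk n w (2*n - k) m := by
  have := (w.2⁻¹ m).isLt
  have := hpair m
  simp only [muk_apply, hsh.inv_apply_rev, Fin.val_rev]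
  split_ifs <;> omega

lemma muk_rev_bounds {w : Wt n} (hsh : inSh n w.2) (hpair : ∀ m, w.1 m + w.1 m.rev = 1)
    {m : Fin (2*n)} (hm : ∀ k < 2*n, 0 ≤ muk n w k m ∧ muk n w k m ≤ 1) :
    ∀ k < 2*n, 0 ≤ muk n w k m.rev ∧ muk n w k m.rev ≤ 1 := by
  intro k hk
  rw [muk_rev hsh hpair hk.le]
  rcases Nat.eq_zero_or_pos k with rfl | hpos
  · have := hm 0 m.pos
    rw [Nat.sub_zero, muk_two_mul]
    omega
  · have := hm (2*n - k) (by omega)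
    omega

/-- The representative of the class of `k < 2n` in the cyclic window `(a, a + 2n]`. -/
def liftAbove (n a k : ℕ) : ℕ := if a < k then k else k + 2 * n

lemma liftAbove_self (a : ℕ) : liftAbove n a a = a + 2*n := if_neg (lt_irrefl a)

lemma mod_two_mul_eq {t : ℕ} (ht : t < 4 * n) : t % (2*n) = if t < 2*n then t else t - 2*n := by
  split_ifs with h
  · exact Nat.mod_eq_of_lt h
  · rw [Nat.mod_eq_sub_mod (by omega), Nat.mod_eq_of_lt (by omega)]

lemma liftAbove_mod (a : ℕ) {k : ℕ} (hk : k < 2*n) : liftAbove n a k % (2*n) = k := by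
  unfold liftAbove
  split_ifs
  · exact Nat.mod_eq_of_lt hk
  · rw [Nat.add_mod_right, Nat.mod_eq_of_lt hk]

lemma liftAbove_mod_self {a t : ℕ} (hat : a < t) (hta : t ≤ a + 2*n) (ha : a < 2*n) :
    liftAbove n a (t % (2*n)) = t := by
  rw [mod_two_mul_eq (by omega), liftAbove]
  split_ifs <;> omega

lemma mod_ne_of_lt_liftAbove {a t k : ℕ} (hat : a < t) (hk : k < 2*n)
    (ht : t < liftAbove n a k) : t % (2*n) ≠ k := by
  unfold liftAbove at ht
  rw [mod_two_mul_eq (by split_ifs at ht <;> omega)]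
  split_ifs at ht ⊢ <;> omega

lemma forall_liftAbove_le_iff {a b : ℕ} (ha : a < 2*n) (hb : b ≤ a + 2*n)
    (P : ℕ → Prop) :
    (∀ k < 2*n, liftAbove n a k ≤ b → P k) ↔ ∀ t ∈ Set.Icc (a + 1) b, P (t % (2*n)) := by
  constructor
  · rintro h t ⟨hat, htb⟩
    exact h _ (Nat.mod_lt _ (by omega)) (by rw [liftAbove_mod_self hat (by omega) ha]; exact htb)
  · intro h k hk hkb
    have hlift : a < liftAbove n a k := by unfold liftAbove; split_ifs <;> omega
    simpa only [liftAbove_mod a hk] using h _ ⟨hlift, hkb⟩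

section Reflection

variable {i j : Fin (2*n)}

lemma rev_ne_self (m : Fin (2*n)) : m.rev ≠ m := by
  intro h
  have := congrArg Fin.val h
  rw [Fin.val_rev] at this
  omega

lemma wrefl_fst_add_fst_rev (hji : j ≠ i) (hjis : j ≠ i.rev) (d : ℤ) (m : Fin (2*n)) :
    (wrefl n i j d).1 m + (wrefl n i j d).1 m.rev = 0 := by
  have := rev_ne_self i
  have := rev_ne_self j
  simp only [wrefl]
  split_ifs <;> grind [Fin.rev_rev, Fin.rev_inj]

lemma inSh_wrefl (d : ℤ) : inSh n (wrefl n i j d).2 := by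
  intro m
  simp only [wrefl, Equiv.Perm.mul_apply, Equiv.swap_apply_def]
  split_ifs <;> grind [Fin.rev_rev, Fin.rev_inj]

lemma wrefl_comm_neg_one (hji : j ≠ i) : wrefl n j i (-1) = wrefl n i j 1 := by
  ext m
  · simp only [wrefl]; split_ifs <;> grind [Fin.rev_rev, Fin.rev_inj]
  · simp only [wrefl, Equiv.swap_comm j i, Equiv.swap_comm j.rev i.rev]

lemma muk_wmul (u w : Wt n) (k : ℕ) (m : Fin (2*n)) :
    muk n (wmul n u w) k m = u.1 m + muk n w k (u.2⁻¹ m) + om n k (u.2⁻¹ m) - om n k m := by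
  simp only [muk, valc, wact, wmul, mul_inv_rev, Equiv.Perm.mul_apply]
  ring

lemma wrefl_inv_apply (d : ℤ) (m : Fin (2*n)) :
    (wrefl n i j d).2⁻¹ m = Equiv.swap i.rev j.rev (Equiv.swap i j m) := by
  simp [wrefl, mul_inv_rev, Equiv.swap_inv]

lemma muk_wrefl_mul_left (hjis : j ≠ i.rev) (d : ℤ) (w : Wt n) (k : ℕ) :
    muk n (wmul n (wrefl n i j d) w) k i = d + muk n w k j + om n k j - om n k i := by
  have := rev_ne_self j
  rw [muk_wmul, wrefl_inv_apply, Equiv.swap_apply_left,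
    Equiv.swap_apply_of_ne_of_ne hjis this.symm]
  simp [wrefl]

lemma muk_wrefl_mul_right (hji : j ≠ i) (hjis : j ≠ i.rev) (d : ℤ) (w : Wt n) (k : ℕ) :
    muk n (wmul n (wrefl n i j d) w) k j = -d + muk n w k i + om n k i - om n k j := by
  have := rev_ne_self i
  have hijs : i ≠ j.rev := fun h => hjis (by rw [h, Fin.rev_rev])
  rw [muk_wmul, wrefl_inv_apply, Equiv.swap_apply_right,
    Equiv.swap_apply_of_ne_of_ne this.symm hijs]
  simp [wrefl, hji]

lemma muk_wrefl_mul_of_ne (d : ℤ) (w : Wt n) (k : ℕ) {m : Fin (2*n)} (hmi : m ≠ i)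
    (hmj : m ≠ j) (hmis : m ≠ i.rev) (hmjs : m ≠ j.rev) :
    muk n (wmul n (wrefl n i j d) w) k m = muk n w k m := by
  rw [muk_wmul, wrefl_inv_apply, Equiv.swap_apply_of_ne_of_ne hmi hmj,
    Equiv.swap_apply_of_ne_of_ne hmis hmjs]
  simp [wrefl, hmi, hmj, hmis, hmjs]

lemma wmul_fst_add_fst_rev {u w : Wt n} (hu : inSh n u.2) (hu0 : ∀ m, u.1 m + u.1 m.rev = 0)
    (hw : ∀ m, w.1 m + w.1 m.rev = 1) (m : Fin (2*n)) :
    (wmul n u w).1 m + (wmul n u w).1 m.rev = 1 := by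
  simp only [wmul, hu.inv_apply_rev]
  linarith [hu0 m, hw (u.2⁻¹ m)]

lemma or_wrefl_iff (P : Wt n → Prop) (hji : j ≠ i) :
    ((i < j ∧ P (wrefl n i j 0)) ∨ (j < i ∧ P (wrefl n j i (-1)))) ↔
      P (wrefl n i j (if i < j then 0 else 1)) := by
  rw [wrefl_comm_neg_one hji]
  rcases lt_or_gt_of_ne hji.symm with h | h
  · simp [h, h.not_gt]
  · simp [h, h.not_gt]


lemma muk_wrefl_mul_eq (hji : j ≠ i) (hjis : j ≠ i.rev) (w : Wt n) {k : ℕ} (hk : k < 2*n) :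
    let c : ℤ := if liftAbove n i k ≤ liftAbove n i j then 1 else 0
    muk n (wmul n (wrefl n i j (if i < j then 0 else 1)) w) k i = muk n w k j + c ∧
      muk n (wmul n (wrefl n i j (if i < j then 0 else 1)) w) k j = muk n w k i - c := by
  rw [muk_wrefl_mul_left hjis, muk_wrefl_mul_right hji hjis]
  have := j.isLt
  simp only [om, liftAbove, Fin.lt_def]
  split_ifs <;> omega

lemma GLperm_wrefl_mul_of_bounds {w : Wt n} (hw : inWt n w) (hGL : GLperm n w) (hji : j ≠ i)
    (hjis : j ≠ i.rev) (d : ℤ)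
    (hslot : ∀ p, p = i ∨ p = j → ∀ k < 2*n,
      0 ≤ muk n (wmul n (wrefl n i j d) w) k p ∧ muk n (wmul n (wrefl n i j d) w) k p ≤ 1) :
    GLperm n (wmul n (wrefl n i j d) w) := by
  obtain ⟨hsum, hB⟩ := (GLperm_iff_muk w).1 hGL
  have hpair' := wmul_fst_add_fst_rev (inSh_wrefl d) (wrefl_fst_add_fst_rev hji hjis d)
    (add_rev_eq_one hw.1 hsum)
  refine (GLperm_iff_muk _).2 ⟨sum_eq_of_add_rev_eq_one hpair', fun k hk m => ?_⟩
  by_cases hm : m = i ∨ m = j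
  · exact hslot m hm k hk
  by_cases hms : m.rev = i ∨ m.rev = j
  · rw [← Fin.rev_rev m]
    exact muk_rev_bounds ((inSh_wrefl d).mul hw.2) hpair' (hslot _ hms) k hk
  simp only [not_or] at hm hms
  rw [muk_wrefl_mul_of_ne d w k hm.1 hm.2 (fun h => hms.1 (by rw [h, Fin.rev_rev]))
    (fun h => hms.2 (by rw [h, Fin.rev_rev]))]
  exact hB k hk m

theorem GLperm_wrefl_mul_iff {w : Wt n} (hw : inWt n w) (hGL : GLperm n w) (hji : j ≠ i)
    (hjis : j ≠ i.rev) :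
    GLperm n (wmul n (wrefl n i j (if i < j then 0 else 1)) w) ↔
      ∀ k < 2*n, liftAbove n i k ≤ liftAbove n i j → muk n w k j = 0 ∧ muk n w k i = 1 := by
  have hB := ((GLperm_iff_muk w).1 hGL).2
  constructor
  · intro h k hk hle
    have h' := ((GLperm_iff_muk _).1 h).2 k hk
    obtain ⟨hi, hj⟩ := muk_wrefl_mul_eq hji hjis w hk
    rw [if_pos hle] at hi hj
    have := h' i
    have := h' j
    have := hB k hk i
    have := hB k hk j
    omega
  · refine fun h => GLperm_wrefl_mul_of_bounds hw hGL hji hjis _ fun p hp k hk => ?_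
    obtain ⟨hi, hj⟩ := muk_wrefl_mul_eq hji hjis w hk
    have := hB k hk i
    have := hB k hk j
    by_cases hle : liftAbove n i k ≤ liftAbove n i j
    · have := h k hk hle
      rw [if_pos hle] at hi hj
      rcases hp with rfl | rfl <;> omega
    · rw [if_neg hle] at hi hj
      rcases hp with rfl | rfl <;> omega

end Reflection

end Alcove

theorem refl_GL_permissible_iff_general (n : ℕ) (w : Wt n)
    (hw : inWt n w) (hGL : GLperm n w)
    (i j : Fin (2*n)) (hji : j ≠ i) (hjis : j ≠ i.rev) :
    ((i < j ∧ GLperm n (wmul n (wrefl n i j 0) w)) ∨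
     (j < i ∧ GLperm n (wmul n (wrefl n j i (-1)) w))) ↔
    (csucc n i ∈ Kset n w j ∧ j ∉ Kset n w i) := by
  have hij : (i : ℕ) + 1 ≤ liftAbove n i j := by unfold liftAbove; split_ifs <;> omega
  have hji' : liftAbove n i j < liftAbove n i i := by
    have : (j : ℕ) ≠ i := Fin.val_ne_of_ne hji
    rw [liftAbove_self, liftAbove]; split_ifs <;> omega
  rw [or_wrefl_iff (fun u => GLperm n (wmul n u w)) hji, GLperm_wrefl_mul_iff hw hGL hji hjis,
    forall_liftAbove_le_iff i.isLt (by rw [liftAbove_self] at hji'; omega)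
      (fun k => muk n w k j = 0 ∧ muk n w k i = 1),
    forall_Icc_muk_mod_iff hGL hij (fun t ht ht' => mod_ne_of_lt_liftAbove ht j.isLt ht')
      (fun t ht ht' => mod_ne_of_lt_liftAbove ht i.isLt (ht'.trans hji')),
    liftAbove_mod _ j.isLt, mem_Kset, mem_Kset]
  have := ((GLperm_iff_muk w).1 hGL).2 j j.isLt i
  exact and_congr Iff.rfl (by omega)

/-- (Lemma on reflections and GL-permissibility.) Let `w ∈ W̃` be
GL-permissible and `i, j` slots with `j ∉ {i, i*}` (0-indexed; paper indices are
`i+1, j+1 ∈ {1,…,2n}`).  Then: either `i < j` and `s_{i,j;0}w` is GL-permissible, or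
`j < i` and `s_{j,i;-1}w` is GL-permissible, iff the class of `i+1` mod `2n` lies in
`K_{j+1}` and the class of `j` mod `2n` does not lie in `K_{i+1}`. -/
theorem refl_GL_permissible_iff (n : ℕ) (hn : 2 ≤ n) (w : Wt n)
    (hw : inWt n w) (hGL : GLperm n w)
    (i j : Fin (2*n)) (hji : j ≠ i) (hjis : j ≠ i.rev) :
    ((i < j ∧ GLperm n (wmul n (wrefl n i j 0) w)) ∨
     (j < i ∧ GLperm n (wmul n (wrefl n j i (-1)) w))) ↔
    (csucc n i ∈ Kset n w j ∧ j ∉ Kset n w i) :=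
  refl_GL_permissible_iff_general n w hw hGL i j hji hjis

end OrthLM
end

section
/- Let μ ∈ {μ₁, μ₂}, let V := X⊗ℝ, and for x ∈ V let c(x) := x_1 + x_{2n} (the common value of x_i + x_{i*}). If n is odd, then Conv(W°μ) = { x ∈ V : 0 ≤ x_j ≤ 1 for all j, c(x) = 1, and Σ_j μ'(j)x_j ≥ 1 for all μ' ∈ W°μ }. If n is even, then Conv(W°μ) = { x ∈ V : 0 ≤ x_j ≤ 1 for all j, c(x) = 1, and Σ_j μ'(j)x_j ≥ 1 for all μ' ∈ τW°μ }, where τ := (n, n+1) ∈ S^h_{2n} (so that τW°μ₁ = W°μ₂ and τW°μ₂ = W°μ₁). -/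
open Finset

/-!
An element of `S^h_{2n}` permutes the `n` pairs `{k, k*}` and flips some of them. It is the
product of a permutation preserving the lower half `{1, …, n}`, which is even (it is `π · π*`
for a permutation `π` of that half), and of one transposition `(k k*)` per flip. Each flip
changes the parity of the number of ones in the lower half of a totally isotropic `0/1`-vector,
so `W°μ` is the set of such vectors with as many ones in the lower half as `μ`, modulo `2`, and
`τ` switches that parity.

On `c(x) = 1` a point is determined by its lower half `t ∈ ℝⁿ`, and `Σ μ'(j) x_j` is the
`ℓ¹`-distance from `t` to the cube vertex `1 - μ'|_{lower half}`, whose parity differs from that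
of `μ'` by `n`. The theorem thus becomes the description of the convex hull of the vertices of
`[0,1]ⁿ` of one parity as the points of the cube at `ℓ¹`-distance at least `1` from every vertex
of the other parity. By Krein–Milman it suffices to see that the extreme points of the latter are
vertices: an integral point is a vertex of the right parity, a point with one fractional
coordinate violates a constraint, and a point with two fractional coordinates `i, j` can be moved
both ways along `e_i ± e_j`, since two tight constraints of the same parity agree at both `i`
and `j` or differ at both.
-/

open scoped symmDiff Topology

lemma natCast_card_symmDiff {α : Type*} [DecidableEq α] (S S' : Finset α) :
    (#(S ∆ S') : ZMod 2) = #S + #S' := by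
  have h1 := card_sdiff_add_card_inter S S'
  have h2 := card_sdiff_add_card_inter S' S
  have h3 : #(S ∆ S') = #(S \ S') + #(S' \ S) := by
    rw [symmDiff_def, sup_eq_union, card_union_of_disjoint disjoint_sdiff_sdiff]
  rw [inter_comm] at h2
  have h4 : #(S ∆ S') + 2 * #(S ∩ S') = #S + #S' := by omega
  have h5 := congrArg (Nat.cast : ℕ → ZMod 2) h4
  push_cast at h5
  rw [← h5, show (2 : ZMod 2) = 0 from rfl, zero_mul, add_zero]

lemma notMem_extremePoints_of_eventually_add_smul_mem {E : Type*} [AddCommGroup E] [Module ℝ E]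
    {A : Set E} {x d : E} (hd : d ≠ 0) (h : ∀ᶠ ε in 𝓝 (0 : ℝ), x + ε • d ∈ A) :
    x ∉ A.extremePoints ℝ := by
  obtain ⟨δ, hδ, hball⟩ := Metric.eventually_nhds_iff.1 h
  have hmem : ∀ ε : ℝ, |ε| < δ → x + ε • d ∈ A := fun ε hε => hball (by simpa using hε)
  have hseg : x ∈ openSegment ℝ (x + (δ / 2) • d) (x + (-(δ / 2)) • d) :=
    ⟨1 / 2, 1 / 2, by norm_num, by norm_num, by norm_num, by module⟩
  intro hx
  have heq := ((mem_extremePoints.1 hx).2 _ (hmem _ (by rw [abs_of_pos (by linarith)]; linarith))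
    _ (hmem _ (by rw [abs_neg, abs_of_pos (by linarith)]; linarith)) hseg).1
  rw [add_eq_left, smul_eq_zero] at heq
  exact heq.elim (by intro h; linarith) hd

section ParityPolytope

variable {ι : Type*} [Fintype ι] [DecidableEq ι]

def cubeVertex (S : Finset ι) : ι → ℝ := fun k => if k ∈ S then 1 else 0

-- On the unit cube this is the ℓ¹-distance from `t` to `cubeVertex S`; it is affine in `t`.
def vertexDist (S : Finset ι) (t : ι → ℝ) : ℝ := ∑ k, if k ∈ S then 1 - t k else t k

def parityPolytope (p : ZMod 2) : Set (ι → ℝ) :=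
  {t | (∀ k, t k ∈ Set.Icc 0 1) ∧ ∀ S : Finset ι, (#S : ZMod 2) ≠ p → 1 ≤ vertexDist S t}

lemma one_le_vertexDist_cubeVertex {S S' : Finset ι} (h : S ≠ S') :
    1 ≤ vertexDist S' (cubeVertex S) := by
  obtain ⟨k, hk⟩ : ∃ k, ¬(k ∈ S ↔ k ∈ S') := by
    by_contra! h'
    exact h (Finset.ext h')
  have hterm : ∀ m, 0 ≤ (if m ∈ S' then 1 - cubeVertex S m else cubeVertex S m) := by
    intro m; unfold cubeVertex; split_ifs <;> norm_num
  calc (1 : ℝ) = if k ∈ S' then 1 - cubeVertex S k else cubeVertex S k := by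
        unfold cubeVertex; by_cases k ∈ S <;> by_cases k ∈ S' <;> simp_all
    _ ≤ vertexDist S' (cubeVertex S) := single_le_sum (fun m _ => hterm m) (mem_univ k)

lemma cubeVertex_mem_parityPolytope {S : Finset ι} {p : ZMod 2} (hS : (#S : ZMod 2) = p) :
    cubeVertex S ∈ parityPolytope p := by
  refine ⟨fun k => ?_, fun S' hS' => one_le_vertexDist_cubeVertex ?_⟩
  · unfold cubeVertex; split_ifs <;> simp
  · rintro rfl; exact hS' hS

lemma vertexDist_add_smul (S : Finset ι) (t d : ι → ℝ) (ε : ℝ) :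
    vertexDist S (t + ε • d) =
      vertexDist S t + ε * ((fun k => if k ∈ S then -1 else 1) ⬝ᵥ d) := by
  simp only [vertexDist, dotProduct, mul_sum, ← sum_add_distrib, Pi.add_apply, Pi.smul_apply,
    smul_eq_mul]
  refine sum_congr rfl fun k _ => ?_
  split_ifs <;> ring

lemma vertexDist_smul_add_smul (S : Finset ι) (t u : ι → ℝ) {a b : ℝ} (hab : a + b = 1) :
    vertexDist S (a • t + b • u) = a * vertexDist S t + b * vertexDist S u := by
  simp only [vertexDist, mul_sum, ← sum_add_distrib, Pi.add_apply, Pi.smul_apply, smul_eq_mul]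
  refine sum_congr rfl fun k _ => ?_
  split_ifs
  · linear_combination -hab
  · ring

lemma convex_parityPolytope (p : ZMod 2) : Convex ℝ (parityPolytope (ι := ι) p) := by
  rintro t ⟨ht, htS⟩ u ⟨hu, huS⟩ a b ha hb hab
  refine ⟨fun k => ?_, fun S hS => ?_⟩
  · exact convex_Icc (0 : ℝ) 1 (ht k) (hu k) ha hb hab
  · rw [vertexDist_smul_add_smul S t u hab]
    nlinarith [htS S hS, huS S hS]

lemma continuous_vertexDist (S : Finset ι) : Continuous (vertexDist S) :=
  continuous_finsetSum _ fun k _ => by split_ifs <;> fun_prop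

lemma isCompact_parityPolytope (p : ZMod 2) : IsCompact (parityPolytope (ι := ι) p) := by
  have hcube : IsCompact (Set.univ.pi fun _ : ι => Set.Icc (0 : ℝ) 1) :=
    isCompact_univ_pi fun _ => isCompact_Icc
  refine hcube.of_isClosed_subset ?_ fun t ht => Set.mem_univ_pi.2 ht.1
  simp only [parityPolytope, Set.ofPred_and, Set.ofPred_forall]
  exact (isClosed_iInter fun k => isClosed_Icc.preimage (continuous_apply k)).inter
    (isClosed_iInter fun S => isClosed_iInter fun _ => isClosed_le continuous_const (continuous_vertexDist S))

lemma eq_or_fractional_mem_symmDiff {t : ι → ℝ} (ht : ∀ k, t k ∈ Set.Icc 0 1) {S S' : Finset ι}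
    (hpar : (#S : ZMod 2) = #S') (hS : vertexDist S t = 1) (hS' : vertexDist S' t = 1) :
    S = S' ∨ ∀ k, t k ∈ Set.Ioo 0 1 → k ∈ S ∆ S' := by
  set c : ι → ℝ := fun k => if k ∈ S then 1 - t k else t k with hc_def
  have hc : ∀ k, 0 ≤ c k := fun k => by
    simp only [hc_def]; split_ifs <;> linarith [(ht k).1, (ht k).2]
  have hsum : vertexDist S t + vertexDist S' t =
      #(S ∆ S') + 2 * ∑ k ∈ univ.filter (· ∉ S ∆ S'), c k := by
    have hpt : ∀ k, ((if k ∈ S then 1 - t k else t k) + if k ∈ S' then 1 - t k else t k) =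
        if k ∈ S ∆ S' then 1 else 2 * c k := fun k => by
      by_cases hk : k ∈ S <;> by_cases hk' : k ∈ S' <;> simp [hc_def, mem_symmDiff, hk, hk'] <;> ring
    rw [vertexDist, vertexDist, ← sum_add_distrib, sum_congr rfl fun k _ => hpt k, sum_ite,
      sum_const, nsmul_one, filter_mem_eq_inter, univ_inter, mul_sum]
  have heven : Even #(S ∆ S') := by
    rw [← ZMod.natCast_eq_zero_iff_even, natCast_card_symmDiff, hpar, CharTwo.add_self_eq_zero]
  rcases Nat.eq_zero_or_pos #(S ∆ S') with h0 | hpos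
  · exact Or.inl (symmDiff_eq_bot.1 (card_eq_zero.1 h0))
  right
  have h2 : (2 : ℝ) ≤ #(S ∆ S') := by
    obtain ⟨m, hm⟩ := heven
    exact_mod_cast (show 2 ≤ #(S ∆ S') by omega)
  have hrest : ∑ k ∈ univ.filter (· ∉ S ∆ S'), c k = 0 :=
    le_antisymm (by linarith) (sum_nonneg fun k _ => hc k)
  intro k hk
  by_contra hkD
  have hck := (sum_eq_zero_iff_of_nonneg fun k _ => hc k).1 hrest k (by simpa using hkD)
  simp only [hc_def] at hck
  split_ifs at hck <;> linarith [hk.1, hk.2]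

lemma exists_direction_keeping_tight {p : ZMod 2} {t : ι → ℝ} (ht : ∀ k, t k ∈ Set.Icc 0 1)
    {i j : ι} (hi : t i ∈ Set.Ioo 0 1) (hj : t j ∈ Set.Ioo 0 1) :
    ∃ η : ℝ, ∀ S : Finset ι, (#S : ZMod 2) ≠ p → vertexDist S t = 1 →
      ∀ ε : ℝ, vertexDist S (t + ε • (Pi.single i 1 + Pi.single j η)) = 1 := by
  set sgn : Finset ι → ι → ℝ := fun S k => if k ∈ S then -1 else 1 with hsgn
  suffices ∃ η : ℝ, ∀ S : Finset ι, (#S : ZMod 2) ≠ p → vertexDist S t = 1 →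
      sgn S i * 1 + sgn S j * η = 0 by
    obtain ⟨η, hη⟩ := this
    refine ⟨η, fun S hSp hS ε => ?_⟩
    rw [vertexDist_add_smul, dotProduct_add, dotProduct_single, dotProduct_single, hη S hSp hS, hS,
      mul_zero, add_zero]
  by_cases htight : ∃ S₀ : Finset ι, (#S₀ : ZMod 2) ≠ p ∧ vertexDist S₀ t = 1
  · obtain ⟨S₀, hS₀p, hS₀⟩ := htight
    refine ⟨-(sgn S₀ i * sgn S₀ j), fun S hSp hS => ?_⟩
    have hpar : (#S : ZMod 2) = #S₀ :=
      (by decide : ∀ a b c : ZMod 2, a ≠ c → b ≠ c → a = b) _ _ _ hSp hS₀p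
    rcases eq_or_fractional_mem_symmDiff ht hpar hS hS₀ with rfl | hD
    · simp only [hsgn]; split_ifs <;> norm_num
    · have := hD i hi; have := hD j hj
      simp only [hsgn, mem_symmDiff] at *
      split_ifs <;> simp_all
  · push Not at htight
    exact ⟨0, fun S hSp hS => absurd hS (htight S hSp)⟩

lemma eventually_add_smul_mem_parityPolytope {p : ZMod 2} {t d : ι → ℝ}
    (ht : t ∈ parityPolytope p) (hd : ∀ k, d k ≠ 0 → t k ∈ Set.Ioo 0 1)
    (htight : ∀ S : Finset ι, (#S : ZMod 2) ≠ p → vertexDist S t = 1 →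
      ∀ ε : ℝ, vertexDist S (t + ε • d) = 1) :
    ∀ᶠ ε in 𝓝 (0 : ℝ), t + ε • d ∈ parityPolytope p := by
  have hline : ∀ {f : ℝ → ℝ}, Continuous f → Filter.Tendsto f (𝓝 0) (𝓝 (f 0)) :=
    fun hf => hf.tendsto 0
  refine Filter.eventually_and.2 ⟨Filter.eventually_all.2 fun k => ?_,
    Filter.eventually_all.2 fun S => ?_⟩
  · by_cases hk : d k = 0
    · exact Filter.Eventually.of_forall fun ε => by simpa [hk] using ht.1 k
    have hlim := hline (f := fun ε => t k + ε * d k) (by fun_prop)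
    simp only [zero_mul, add_zero] at hlim
    exact (hlim.eventually (Ioo_mem_nhds (hd k hk).1 (hd k hk).2)).mono
      fun ε hε => Set.Ioo_subset_Icc_self hε
  · by_cases hSp : (#S : ZMod 2) = p
    · exact Filter.Eventually.of_forall fun ε h => absurd hSp h
    by_cases hS : vertexDist S t = 1
    · exact Filter.Eventually.of_forall fun ε _ => (htight S hSp hS ε).ge
    have hlim := hline (f := fun ε => vertexDist S (t + ε • d))
      ((continuous_vertexDist S).comp (by fun_prop))
    simp only [zero_smul, add_zero] at hlim
    exact (hlim.eventually_const_lt (lt_of_le_of_ne (ht.2 S hSp) (Ne.symm hS))).mono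
      fun ε hε _ => hε.le

lemma notMem_extremePoints_of_two_fractional {p : ZMod 2} {t : ι → ℝ} (ht : t ∈ parityPolytope p)
    {i j : ι} (hij : i ≠ j) (hi : t i ∈ Set.Ioo 0 1) (hj : t j ∈ Set.Ioo 0 1) :
    t ∉ (parityPolytope p).extremePoints ℝ := by
  obtain ⟨η, hη⟩ := exists_direction_keeping_tight (p := p) ht.1 hi hj
  refine notMem_extremePoints_of_eventually_add_smul_mem (fun h => ?_)
    (eventually_add_smul_mem_parityPolytope ht (fun k hk => ?_) hη)
  · simpa [hij] using congrFun h i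
  · by_cases hki : k = i
    · exact hki ▸ hi
    by_cases hkj : k = j
    · exact hkj ▸ hj
    · simp [hki, hkj] at hk

lemma mem_image_cubeVertex_of_integral {p : ZMod 2} {t : ι → ℝ} (ht : t ∈ parityPolytope p)
    (hint : ∀ k, t k = 0 ∨ t k = 1) : t ∈ cubeVertex '' {S | (#S : ZMod 2) = p} := by
  set S := univ.filter fun k => t k = 1
  have hS : cubeVertex S = t := funext fun k => by
    rcases hint k with h | h <;> simp [cubeVertex, S, h]
  refine ⟨S, ?_, hS⟩
  by_contra hSp
  have h0 : vertexDist S t = 0 :=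
    sum_eq_zero fun k _ => by rcases hint k with h | h <;> simp [S, h]
  linarith [ht.2 S hSp]

lemma notMem_parityPolytope_of_unique_fractional {p : ZMod 2} {t : ι → ℝ} {i : ι}
    (hi : t i ∈ Set.Ioo 0 1) (hint : ∀ k ≠ i, t k = 0 ∨ t k = 1) : t ∉ parityPolytope p := by
  set S := univ.filter fun k => t k = 1
  have hiS : i ∉ S := by simp [S, hi.2.ne]
  have hdist : ∀ S' : Finset ι, (∀ k ≠ i, k ∈ S' ↔ k ∈ S) →
      vertexDist S' t = if i ∈ S' then 1 - t i else t i := fun S' hS' =>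
    sum_eq_single i (fun k _ hki => by
      rcases hint k hki with h | h <;> simp [hS' k hki, S, h]) (by simp)
  rintro ⟨-, hcon⟩
  by_cases hSp : (#S : ZMod 2) = p
  · have hcard : (#(insert i S) : ZMod 2) ≠ p := by
      rw [card_insert_of_notMem hiS, Nat.cast_succ, hSp]; simp
    have := hcon _ hcard
    rw [hdist _ fun k hki => by simp [hki]] at this
    simp at this; linarith [hi.1]
  · have := hcon _ hSp
    rw [hdist _ fun k _ => Iff.rfl, if_neg hiS] at this
    linarith [hi.2]

lemma extremePoints_parityPolytope_subset (p : ZMod 2) :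
    (parityPolytope p).extremePoints ℝ ⊆ cubeVertex '' {S : Finset ι | (#S : ZMod 2) = p} := by
  intro t ht
  have hP := ht.1
  have hint : ∀ k, t k ∉ Set.Ioo 0 1 → t k = 0 ∨ t k = 1 := fun k hk => by
    obtain ⟨h0, h1⟩ := hP.1 k
    simp only [Set.mem_Ioo, not_and_or, not_lt] at hk
    rcases hk with hk | hk
    · exact Or.inl (le_antisymm hk h0)
    · exact Or.inr (le_antisymm h1 hk)
  by_cases hfrac : ∃ i, t i ∈ Set.Ioo 0 1
  · obtain ⟨i, hi⟩ := hfrac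
    by_cases hfrac' : ∃ j, j ≠ i ∧ t j ∈ Set.Ioo 0 1
    · obtain ⟨j, hji, hj⟩ := hfrac'
      exact absurd ht (notMem_extremePoints_of_two_fractional hP (Ne.symm hji) hi hj)
    · push Not at hfrac'
      exact absurd hP (notMem_parityPolytope_of_unique_fractional hi fun k hk =>
        hint k (hfrac' k hk))
  · push Not at hfrac
    exact mem_image_cubeVertex_of_integral hP fun k => hint k (hfrac k)

theorem convexHull_cubeVertex_parity (p : ZMod 2) :
    convexHull ℝ (cubeVertex '' {S : Finset ι | (#S : ZMod 2) = p}) = parityPolytope p := by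
  refine (convexHull_min ?_ (convex_parityPolytope p)).antisymm ?_
  · rintro _ ⟨S, hS, rfl⟩
    exact cubeVertex_mem_parityPolytope hS
  · have hclosed : IsClosed (convexHull ℝ (cubeVertex '' {S : Finset ι | (#S : ZMod 2) = p})) :=
      ((Set.toFinite _).isCompact_convexHull ℝ).isClosed
    calc parityPolytope p
        = closure (convexHull ℝ ((parityPolytope p).extremePoints ℝ)) :=
          (closure_convexHull_extremePoints (isCompact_parityPolytope p)
            (convex_parityPolytope p)).symm
      _ ⊆ closure (convexHull ℝ (cubeVertex '' {S | (#S : ZMod 2) = p})) :=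
          closure_mono (convexHull_mono (extremePoints_parityPolytope_subset p))
      _ = _ := hclosed.closure_eq

end ParityPolytope

namespace OrthLM

variable {n : ℕ}

def low (i : Fin n) : Fin (2 * n) := ⟨i, by omega⟩

def pairIndex (k : Fin (2 * n)) : Fin n :=
  if h : (k : ℕ) < n then ⟨k, h⟩ else ⟨2 * n - 1 - k, by omega⟩

@[simp] lemma val_low (i : Fin n) : (low i : ℕ) = i := rfl

@[simp] lemma pairIndex_low (i : Fin n) : pairIndex (low i) = i := by
  simp [pairIndex, low]

@[simp] lemma pairIndex_rev (k : Fin (2 * n)) : pairIndex k.rev = pairIndex k := by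
  have := k.isLt
  unfold pairIndex
  split_ifs with h1 h2 h2 <;> ext <;> simp only [Fin.val_rev] at h1 h2 ⊢ <;> omega

lemma low_pairIndex_of_lt {k : Fin (2 * n)} (hk : (k : ℕ) < n) : low (pairIndex k) = k := by
  ext; simp [pairIndex, hk]

lemma rev_lt_iff (k : Fin (2 * n)) : (k.rev : ℕ) < n ↔ ¬(k : ℕ) < n := by
  have := k.isLt; simp only [Fin.val_rev]; omega

lemma le_rev_low (i : Fin n) : n ≤ ((low i).rev : ℕ) := by
  simp [Fin.val_rev]; omega

lemma low_ne_rev_low (i j : Fin n) : low i ≠ (low j).rev := fun h => by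
  have := congrArg Fin.val h; simp [Fin.val_rev] at this; omega

lemma exists_eq_low_or_eq_rev_low (k : Fin (2 * n)) : ∃ i, k = low i ∨ k = (low i).rev := by
  refine ⟨pairIndex k, ?_⟩
  by_cases hk : (k : ℕ) < n
  · exact Or.inl (low_pairIndex_of_lt hk).symm
  · right; ext; simp [pairIndex, hk, Fin.val_rev]; omega

lemma sum_fin_two_mul {M : Type*} [AddCommMonoid M] (f : Fin (2 * n) → M) :
    ∑ k, f k = ∑ i, (f (low i) + f (low i).rev) := by
  have hbij : Function.Bijective (Sum.elim low (Fin.rev ∘ low) : Fin n ⊕ Fin n → Fin (2 * n)) := by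
    refine ⟨?_, fun k => ?_⟩
    · rintro (i | i) (j | j) h <;> simp only [Sum.elim_inl, Sum.elim_inr, Function.comp] at h
      · exact congrArg Sum.inl (by simpa using congrArg pairIndex h)
      · exact absurd h (low_ne_rev_low i j)
      · exact absurd h.symm (low_ne_rev_low j i)
      · exact congrArg Sum.inr (by simpa using congrArg pairIndex h)
    · obtain ⟨i, rfl | rfl⟩ := exists_eq_low_or_eq_rev_low k
      exacts [⟨Sum.inl i, rfl⟩, ⟨Sum.inr i, rfl⟩]
  rw [← Fintype.sum_bijective _ hbij (f ∘ Sum.elim low (Fin.rev ∘ low)) f fun _ => rfl,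
    Fintype.sum_sum_type, sum_add_distrib]
  rfl

lemma permAct_mul (σ σ' : Equiv.Perm (Fin (2 * n))) (y : Fin (2 * n) → ℤ) :
    permAct n (σ * σ') y = permAct n σ (permAct n σ' y) := by
  ext; simp [permAct]

lemma inSh_inv {σ : Equiv.Perm (Fin (2 * n))} (hσ : inSh n σ) : inSh n σ⁻¹ := fun k => by
  rw [Equiv.Perm.inv_eq_iff_eq, hσ]; simp

lemma inSh_mul {σ σ' : Equiv.Perm (Fin (2 * n))} (hσ : inSh n σ) (hσ' : inSh n σ') :
    inSh n (σ * σ') := fun k => by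
  simp only [Equiv.Perm.mul_apply]; rw [hσ', hσ]

def pairFlip (E : Finset (Fin n)) : Equiv.Perm (Fin (2 * n)) :=
  Function.Involutive.toPerm (fun k => if pairIndex k ∈ E then k.rev else k) fun k => by
    by_cases hk : pairIndex k ∈ E <;> simp [hk]

lemma pairFlip_apply (E : Finset (Fin n)) (k : Fin (2 * n)) :
    pairFlip E k = if pairIndex k ∈ E then k.rev else k := rfl

lemma pairFlip_mul_self (E : Finset (Fin n)) : pairFlip E * pairFlip E = 1 :=
  Equiv.ext fun k => by by_cases hk : pairIndex k ∈ E <;> simp [pairFlip_apply, hk]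

lemma inv_pairFlip (E : Finset (Fin n)) : (pairFlip E)⁻¹ = pairFlip E :=
  inv_eq_of_mul_eq_one_right (pairFlip_mul_self E)

lemma inSh_pairFlip (E : Finset (Fin n)) : inSh n (pairFlip E) := fun k => by
  by_cases hk : pairIndex k ∈ E <;> simp [pairFlip_apply, hk]

lemma pairIndex_pairFlip (E : Finset (Fin n)) (k : Fin (2 * n)) :
    pairIndex (pairFlip E k) = pairIndex k := by
  rw [pairFlip_apply]; split_ifs <;> simp

lemma swap_low_rev_apply_of_pairIndex_ne {a : Fin n} {k : Fin (2 * n)} (hk : pairIndex k ≠ a) :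
    Equiv.swap (low a) (low a).rev k = k :=
  Equiv.swap_apply_of_ne_of_ne (by rintro rfl; simp at hk) (by rintro rfl; simp at hk)

lemma pairFlip_insert {E : Finset (Fin n)} {a : Fin n} (ha : a ∉ E) :
    pairFlip (insert a E) = Equiv.swap (low a) (low a).rev * pairFlip E := by
  ext1 k
  by_cases hk : pairIndex k = a
  · obtain ⟨i, rfl | rfl⟩ := exists_eq_low_or_eq_rev_low k <;> simp only [pairIndex_low,
      pairIndex_rev] at hk <;> subst hk <;> simp [pairFlip_apply, ha]
  · rw [Equiv.Perm.mul_apply, swap_low_rev_apply_of_pairIndex_ne (by rwa [pairIndex_pairFlip]),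
      pairFlip_apply, pairFlip_apply]
    simp only [mem_insert, hk, false_or]

lemma sign_pairFlip (E : Finset (Fin n)) : Equiv.Perm.sign (pairFlip E) = (-1) ^ #E := by
  induction E using Finset.induction_on with
  | empty => simp [show pairFlip (∅ : Finset (Fin n)) = 1 from Equiv.ext fun k => rfl]
  | insert a E ha ih =>
    rw [pairFlip_insert ha, Equiv.Perm.sign_mul, ih, Equiv.Perm.sign_swap (low_ne_rev_low a a),
      card_insert_of_notMem ha, pow_succ, mul_comm]

def IsIsotropic (n : ℕ) (y : Fin (2 * n) → ℤ) : Prop := (∀ j, y j = 0 ∨ y j = 1) ∧ TotIso n y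

def halfWeight (n : ℕ) (y : Fin (2 * n) → ℤ) : ZMod 2 := ∑ i : Fin n, (y (low i) : ZMod 2)

def isoClass (n : ℕ) (c : ZMod 2) : Set (Fin (2 * n) → ℤ) :=
  {y | IsIsotropic n y ∧ halfWeight n y = c}

lemma halfWeight_pairFlip (E : Finset (Fin n)) {y : Fin (2 * n) → ℤ} (hy : TotIso n y) :
    halfWeight n (permAct n (pairFlip E) y) = halfWeight n y + #E := by
  have hrev : ∀ i, (y (low i).rev : ZMod 2) = y (low i) + 1 := fun i => by
    rw [show y (low i).rev = 1 - y (low i) by linarith [hy (low i)]]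
    push_cast; rw [CharTwo.sub_eq_add, add_comm]
  have hpt : ∀ i, (permAct n (pairFlip E) y (low i) : ZMod 2) =
      y (low i) + if i ∈ E then 1 else 0 := fun i => by
    simp only [permAct, inv_pairFlip, pairFlip_apply, pairIndex_low]
    split_ifs <;> simp [hrev]
  simp only [halfWeight, hpt, sum_add_distrib, sum_boole, filter_mem_eq_inter, univ_inter]

lemma lt_iff_of_preserves {σ : Equiv.Perm (Fin (2 * n))} (hσ : inSh n σ)
    (hlow : ∀ i, (σ (low i) : ℕ) < n) (k : Fin (2 * n)) : (σ k : ℕ) < n ↔ (k : ℕ) < n := by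
  obtain ⟨i, rfl | rfl⟩ := exists_eq_low_or_eq_rev_low k
  · simp [hlow i]
  · rw [hσ, rev_lt_iff, rev_lt_iff]; simp [hlow i]

lemma sign_eq_one_of_preserves {σ : Equiv.Perm (Fin (2 * n))} (hσ : inSh n σ)
    (hlow : ∀ i, (σ (low i) : ℕ) < n) : Equiv.Perm.sign σ = 1 := by
  have hp := lt_iff_of_preserves hσ hlow
  have hp' : ∀ k, ¬(σ k : ℕ) < n ↔ ¬(k : ℕ) < n := fun k => (hp k).not
  set σlow := σ.subtypePerm (p := fun k : Fin (2 * n) => (k : ℕ) < n) hp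
  set σhigh := σ.subtypePerm (p := fun k : Fin (2 * n) => ¬(k : ℕ) < n) hp'
  have hsplit : σ = σlow.subtypeCongr σhigh := Equiv.ext fun k => by
    by_cases hk : (k : ℕ) < n <;> simp [σlow, σhigh, hk]
  have hconj : Equiv.Perm.sign σhigh = Equiv.Perm.sign σlow :=
    Equiv.Perm.sign_eq_sign_of_equiv _ _
      (Fin.revPerm.subtypeEquiv fun k => (rev_lt_iff k).symm) fun k => Subtype.ext (hσ k.1).symm
  rw [hsplit, Equiv.Perm.sign_subtypeCongr, hconj, Int.units_mul_self]

lemma halfWeight_permAct_of_preserves {σ : Equiv.Perm (Fin (2 * n))} (hσ : inSh n σ)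
    (hlow : ∀ i, (σ (low i) : ℕ) < n) (y : Fin (2 * n) → ℤ) :
    halfWeight n (permAct n σ y) = halfWeight n y := by
  have hinv : ∀ i, low (pairIndex (σ⁻¹ (low i))) = σ⁻¹ (low i) := fun i =>
    low_pairIndex_of_lt ((lt_iff_of_preserves hσ hlow _).1 (by simp))
  refine Fintype.sum_bijective (fun i => pairIndex (σ⁻¹ (low i)))
    (Finite.injective_iff_bijective.1 fun i j h => ?_) _ _ fun i => by
      simp only [permAct]; rw [hinv]
  have := congrArg low h
  rw [hinv, hinv] at this
  simpa using congrArg pairIndex (σ⁻¹.injective this)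

lemma halfWeight_permAct_of_inW0 {σ : Equiv.Perm (Fin (2 * n))} (hσ : inW0 n σ)
    {y : Fin (2 * n) → ℤ} (hy : TotIso n y) : halfWeight n (permAct n σ y) = halfWeight n y := by
  set E := univ.filter fun i => n ≤ (σ (low i) : ℕ)
  have hρ : inSh n (σ * pairFlip E) := inSh_mul hσ.1 (inSh_pairFlip E)
  have hlow : ∀ i, ((σ * pairFlip E) (low i) : ℕ) < n := fun i => by
    have hiE : i ∈ E ↔ n ≤ (σ (low i) : ℕ) := by simp [E]
    rw [Equiv.Perm.mul_apply, pairFlip_apply, pairIndex_low]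
    split_ifs with hi
    · rw [hσ.1, rev_lt_iff]; exact not_lt.2 (hiE.1 hi)
    · exact not_le.1 (mt hiE.2 hi)
  have hσρ : σ = σ * pairFlip E * pairFlip E := by rw [mul_assoc, pairFlip_mul_self, mul_one]
  have heven : Even #E := by
    have hsign := hσ.2
    rw [hσρ, Equiv.Perm.sign_mul, sign_eq_one_of_preserves hρ hlow, one_mul, sign_pairFlip] at hsign
    exact (neg_one_pow_eq_one_iff_even (by decide)).1 hsign
  rw [hσρ, permAct_mul, halfWeight_permAct_of_preserves hρ hlow, halfWeight_pairFlip E hy,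
    (ZMod.natCast_eq_zero_iff_even).2 heven, add_zero]

lemma IsIsotropic.permAct {σ : Equiv.Perm (Fin (2 * n))} (hσ : inSh n σ) {y : Fin (2 * n) → ℤ}
    (hy : IsIsotropic n y) : IsIsotropic n (permAct n σ y) :=
  ⟨fun j => hy.1 _, fun j => by simp only [OrthLM.permAct]; rw [inSh_inv hσ]; exact hy.2 _⟩

lemma permAct_pairFlip_of_isIsotropic {y z : Fin (2 * n) → ℤ} (hy : IsIsotropic n y)
    (hz : IsIsotropic n z) :
    permAct n (pairFlip (univ.filter fun i => y (low i) ≠ z (low i))) z = y := by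
  funext k
  obtain ⟨i, rfl | rfl⟩ := exists_eq_low_or_eq_rev_low k <;>
    have := hy.1 (low i) <;> have := hz.1 (low i) <;> have := hy.2 (low i) <;>
    have := hz.2 (low i) <;> by_cases h : y (low i) = z (low i) <;>
    simp [OrthLM.permAct, inv_pairFlip, pairFlip_apply, h] <;> omega

theorem orbit_eq_isoClass {μ : Fin (2 * n) → ℤ} (hμ : IsIsotropic n μ) :
    {y | ∃ σ, inW0 n σ ∧ y = permAct n σ μ} = isoClass n (halfWeight n μ) := by
  ext y
  constructor
  · rintro ⟨σ, hσ, rfl⟩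
    exact ⟨hμ.permAct hσ.1, halfWeight_permAct_of_inW0 hσ hμ.2⟩
  · rintro ⟨hy, hyμ⟩
    set D := univ.filter fun i => y (low i) ≠ μ (low i)
    have hD := permAct_pairFlip_of_isIsotropic hy hμ
    refine ⟨pairFlip D, ⟨inSh_pairFlip D, ?_⟩, hD.symm⟩
    have hweight := halfWeight_pairFlip D hμ.2
    rw [hD, hyμ, left_eq_add] at hweight
    rw [sign_pairFlip, (ZMod.natCast_eq_zero_iff_even.1 hweight).neg_one_pow]

lemma tau_eq_pairFlip (hn : 2 ≤ n) : tau n hn = pairFlip {⟨n - 1, by omega⟩} := by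
  ext k
  simp only [tau, pairFlip_apply, Equiv.swap_apply_def, pairIndex, mem_singleton]
  split_ifs <;> simp_all [Fin.ext_iff, Fin.val_rev] <;> omega

theorem tauOrbit_eq_isoClass (hn : 2 ≤ n) {μ : Fin (2 * n) → ℤ} (hμ : IsIsotropic n μ) :
    {y | ∃ σ, inW0 n σ ∧ y = permAct n (tau n hn * σ) μ} = isoClass n (halfWeight n μ + 1) := by
  have hτ : ∀ z, TotIso n z → halfWeight n (permAct n (tau n hn) z) = halfWeight n z + 1 := by
    intro z hz; rw [tau_eq_pairFlip, halfWeight_pairFlip _ hz, card_singleton, Nat.cast_one]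
  have hττ : ∀ z, permAct n (tau n hn) (permAct n (tau n hn) z) = z := fun z => by
    rw [← permAct_mul, tau_eq_pairFlip, pairFlip_mul_self]; rfl
  have hτSh : inSh n (tau n hn) := tau_eq_pairFlip hn ▸ inSh_pairFlip _
  ext y
  simp only [permAct_mul]
  constructor
  · rintro ⟨σ, hσ, rfl⟩
    have hz : permAct n σ μ ∈ isoClass n (halfWeight n μ) := orbit_eq_isoClass hμ ▸ ⟨σ, hσ, rfl⟩
    exact ⟨hz.1.permAct hτSh, by rw [hτ _ hz.1.2, hz.2]⟩
  · rintro ⟨hy, hyc⟩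
    have hτy : permAct n (tau n hn) y ∈ isoClass n (halfWeight n μ) :=
      ⟨hy.permAct hτSh, by rw [hτ _ hy.2, hyc, add_assoc, CharTwo.add_self_eq_zero, add_zero]⟩
    rw [← orbit_eq_isoClass hμ] at hτy
    obtain ⟨σ, hσ, hσy⟩ := hτy
    exact ⟨σ, hσ, by rw [← hσy, hττ]⟩

def unfoldPair (n : ℕ) : (Fin n → ℝ) →ᵃ[ℝ] (Fin (2 * n) → ℝ) where
  toFun t k := if (k : ℕ) < n then t (pairIndex k) else 1 - t (pairIndex k)
  linear :=
    { toFun := fun t k => if (k : ℕ) < n then t (pairIndex k) else -t (pairIndex k)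
      map_add' := fun t u => by ext k; by_cases hk : (k : ℕ) < n <;> simp [hk]; ring
      map_smul' := fun c t => by ext k; by_cases hk : (k : ℕ) < n <;> simp [hk] }
  map_vadd' := fun t u => by ext k; by_cases hk : (k : ℕ) < n <;> simp [hk]; ring

@[simp] lemma unfoldPair_low (t : Fin n → ℝ) (i : Fin n) : unfoldPair n t (low i) = t i := by
  simp [unfoldPair]

@[simp] lemma unfoldPair_rev_low (t : Fin n → ℝ) (i : Fin n) :
    unfoldPair n t (low i).rev = 1 - t i := by
  simp only [unfoldPair, AffineMap.coe_mk]
  rw [if_neg (not_lt.2 (le_rev_low i)), pairIndex_rev, pairIndex_low]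

lemma unfoldPair_restrict {x : Fin (2 * n) → ℝ} (hx : ∀ k, x k + x k.rev = 1) :
    unfoldPair n (fun i => x (low i)) = x := by
  funext k
  obtain ⟨i, rfl | rfl⟩ := exists_eq_low_or_eq_rev_low k
  · simp
  · simp; linarith [hx (low i)]

def lowerOnes (y : Fin (2 * n) → ℤ) : Finset (Fin n) := univ.filter fun i => y (low i) = 1

lemma halfWeight_eq_card_lowerOnes {y : Fin (2 * n) → ℤ} (hy : ∀ j, y j = 0 ∨ y j = 1) :
    halfWeight n y = #(lowerOnes y) := by
  rw [lowerOnes, natCast_card_filter]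
  exact sum_congr rfl fun i _ => by rcases hy (low i) with h | h <;> simp [h]

lemma cast_eq_unfoldPair {y : Fin (2 * n) → ℤ} (hy : IsIsotropic n y) :
    (fun k => (y k : ℝ)) = unfoldPair n (cubeVertex (lowerOnes y)) := by
  funext k
  obtain ⟨i, rfl | rfl⟩ := exists_eq_low_or_eq_rev_low k
  · rcases hy.1 (low i) with h | h <;> simp [cubeVertex, lowerOnes, h]
  · have hrev : y (low i).rev = 1 - y (low i) := by linarith [hy.2 (low i)]
    rcases hy.1 (low i) with h | h <;> simp [cubeVertex, lowerOnes, hrev, h]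

def isoOf (S : Finset (Fin n)) : Fin (2 * n) → ℤ :=
  fun k => if ((k : ℕ) < n ↔ pairIndex k ∈ S) then 1 else 0

lemma isIsotropic_isoOf (S : Finset (Fin n)) : IsIsotropic n (isoOf S) := by
  refine ⟨fun k => by unfold isoOf; split_ifs <;> simp, fun k => ?_⟩
  have := rev_lt_iff k
  unfold isoOf
  by_cases hk : (k : ℕ) < n <;> by_cases hS : pairIndex k ∈ S <;> simp_all

lemma lowerOnes_isoOf (S : Finset (Fin n)) : lowerOnes (isoOf S) = S := by
  ext i; simp [lowerOnes, isoOf]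

lemma image_isoClass (p : ZMod 2) :
    (fun y k => (y k : ℝ)) '' isoClass n p =
      unfoldPair n '' (cubeVertex '' {S : Finset (Fin n) | (#S : ZMod 2) = p}) := by
  rw [Set.image_image]
  ext x
  constructor
  · rintro ⟨y, ⟨hy, rfl⟩, rfl⟩
    exact ⟨lowerOnes y, (halfWeight_eq_card_lowerOnes hy.1).symm, (cast_eq_unfoldPair hy).symm⟩
  · rintro ⟨S, hS, rfl⟩
    refine ⟨isoOf S, ⟨isIsotropic_isoOf S, ?_⟩, ?_⟩
    · rw [halfWeight_eq_card_lowerOnes (isIsotropic_isoOf S).1, lowerOnes_isoOf, hS]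
    · exact (cast_eq_unfoldPair (isIsotropic_isoOf S)).trans (by rw [lowerOnes_isoOf])

lemma sum_mul_unfoldPair {z : Fin (2 * n) → ℤ} (hz : IsIsotropic n z) (t : Fin n → ℝ) :
    ∑ k, (z k : ℝ) * unfoldPair n t k = vertexDist (lowerOnes z)ᶜ t := by
  rw [sum_fin_two_mul, vertexDist]
  refine sum_congr rfl fun i _ => ?_
  have hrev : z (low i).rev = 1 - z (low i) := by linarith [hz.2 (low i)]
  rcases hz.1 (low i) with h | h <;> simp [lowerOnes, hrev, h]

lemma natCast_card_compl (S : Finset (Fin n)) : (#Sᶜ : ZMod 2) = n + #S := by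
  have := card_le_univ S
  rw [card_compl, Nat.cast_sub (by simpa using this), Fintype.card_fin, CharTwo.sub_eq_add]

def isoPolytope (n : ℕ) (q : ZMod 2) : Set (Fin (2 * n) → ℝ) :=
  {x | (∀ k, x k + x k.rev = 1) ∧ (∀ j, 0 ≤ x j ∧ x j ≤ 1) ∧
    ∀ z ∈ isoClass n q, 1 ≤ ∑ j, (z j : ℝ) * x j}

lemma image_parityPolytope {p q : ZMod 2} (hpq : q = p + n + 1) :
    unfoldPair n '' parityPolytope p = isoPolytope n q := by
  ext x
  constructor
  · rintro ⟨t, ⟨hbox, hcon⟩, rfl⟩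
    refine ⟨fun k => ?_, fun k => ?_, fun z hz => ?_⟩
    · obtain ⟨i, rfl | rfl⟩ := exists_eq_low_or_eq_rev_low k <;> simp
    · obtain ⟨i, rfl | rfl⟩ := exists_eq_low_or_eq_rev_low k <;> simp <;>
        constructor <;> linarith [(hbox i).1, (hbox i).2]
    · rw [sum_mul_unfoldPair hz.1]
      refine hcon _ ?_
      rw [natCast_card_compl, ← halfWeight_eq_card_lowerOnes hz.1.1, hz.2, hpq]
      exact (by decide : ∀ a b : ZMod 2, a + (b + a + 1) ≠ b) _ _
  · rintro ⟨hpair, hbox, hcon⟩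
    refine ⟨fun i => x (low i), ⟨fun i => hbox (low i), fun S hS => ?_⟩, unfoldPair_restrict hpair⟩
    have hz : isoOf Sᶜ ∈ isoClass n q := by
      refine ⟨isIsotropic_isoOf _, ?_⟩
      rw [halfWeight_eq_card_lowerOnes (isIsotropic_isoOf _).1, lowerOnes_isoOf, natCast_card_compl, hpq]
      exact (by decide : ∀ a b c : ZMod 2, c ≠ b → a + c = b + a + 1) _ _ _ hS
    have := hcon _ hz
    rwa [← unfoldPair_restrict hpair, sum_mul_unfoldPair hz.1, lowerOnes_isoOf, compl_compl] at this

theorem convexHull_isoClass {p q : ZMod 2} (hpq : q = p + n + 1) :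
    convexHull ℝ ((fun y k => (y k : ℝ)) '' isoClass n p) = isoPolytope n q := by
  rw [image_isoClass, ← AffineMap.image_convexHull, convexHull_cubeVertex_parity,
    image_parityPolytope hpq]

lemma isIsotropic_mu1 (n : ℕ) : IsIsotropic n (mu1 n) := by
  refine ⟨fun j => by unfold mu1; split_ifs <;> simp, fun j => ?_⟩
  have := j.isLt
  unfold mu1
  split_ifs <;> simp only [Fin.val_rev] at * <;> omega

lemma isIsotropic_mu2 (n : ℕ) : IsIsotropic n (mu2 n) := by
  refine ⟨fun j => by unfold mu2; split_ifs <;> simp, fun j => ?_⟩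
  have := j.isLt
  unfold mu2
  split_ifs <;> simp only [Fin.val_rev] at * <;> omega

lemma inXR_and_iff {x : Fin (2 * n) → ℝ} (hn : 0 < n) :
    inXR n x ∧ x ⟨0, by omega⟩ + x ⟨2 * n - 1, by omega⟩ = 1 ↔ ∀ k, x k + x k.rev = 1 := by
  have hrev : (⟨0, by omega⟩ : Fin (2 * n)).rev = ⟨2 * n - 1, by omega⟩ := by ext; simp
  constructor
  · rintro ⟨hX, h0⟩ k
    rw [hX k ⟨0, by omega⟩, hrev, h0]
  · intro h
    exact ⟨fun i j => by rw [h i, h j], hrev ▸ h _⟩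

theorem convexHull_orbit_eq (hn : 0 < n) {f g : Equiv.Perm (Fin (2 * n)) → Fin (2 * n) → ℤ}
    {p q : ZMod 2} (hf : {y | ∃ σ, inW0 n σ ∧ y = f σ} = isoClass n p)
    (hg : {y | ∃ σ, inW0 n σ ∧ y = g σ} = isoClass n q) (hpq : q = p + n + 1) :
    convexHull ℝ {y : Fin (2 * n) → ℝ | ∃ σ, inW0 n σ ∧ y = fun i => (f σ i : ℝ)} =
      {x | inXR n x ∧ (∀ j, 0 ≤ x j ∧ x j ≤ 1) ∧ x ⟨0, by omega⟩ + x ⟨2 * n - 1, by omega⟩ = 1 ∧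
        ∀ σ, inW0 n σ → 1 ≤ ∑ j, (g σ j : ℝ) * x j} := by
  have hvert : {y : Fin (2 * n) → ℝ | ∃ σ, inW0 n σ ∧ y = fun i => (f σ i : ℝ)} =
      (fun y k => (y k : ℝ)) '' isoClass n p := by
    rw [← hf]; ext y; simp [eq_comm]
  have hcon : ∀ x : Fin (2 * n) → ℝ, (∀ σ, inW0 n σ → 1 ≤ ∑ j, (g σ j : ℝ) * x j) ↔
      ∀ z ∈ isoClass n q, 1 ≤ ∑ j, (z j : ℝ) * x j := fun x => by
    rw [← hg]
    exact ⟨fun h z ⟨σ, hσ, hz⟩ => hz ▸ h σ hσ, fun h σ hσ => h _ ⟨σ, hσ, rfl⟩⟩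
  rw [hvert, convexHull_isoClass hpq]
  ext x
  simp only [isoPolytope, Set.mem_ofPred_eq, hcon, ← inXR_and_iff hn]
  tauto

/-- Explicit description of the convex hull `Conv(W°μ)` for
`μ ∈ {μ₁, μ₂}`, inside `V = X ⊗ ℝ`, with `c(x) = x_1 + x_{2n}`: for `n` odd it is cut
out by `0 ≤ x ≤ 1`, `c(x) = 1` and `μ'·x ≥ 1` for all `μ' ∈ W°μ`; for `n` even the same
with `μ'` ranging over `τW°μ`, where `τ = (n, n+1)`. -/
theorem convex_hull_description (n : ℕ) (hn : 2 ≤ n)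
    (μ : Fin (2*n) → ℤ) (hμ : μ = mu1 n ∨ μ = mu2 n) :
    (Odd n →
      convexHull ℝ {y : Fin (2*n) → ℝ |
          ∃ σ, inW0 n σ ∧ y = fun i => (permAct n σ μ i : ℝ)} =
        {x : Fin (2*n) → ℝ | inXR n x ∧ (∀ j, 0 ≤ x j ∧ x j ≤ 1) ∧
          x ⟨0, by omega⟩ + x ⟨2*n - 1, by omega⟩ = 1 ∧
          ∀ σ, inW0 n σ → 1 ≤ ∑ j, (permAct n σ μ j : ℝ) * x j}) ∧
    (Even n →
      convexHull ℝ {y : Fin (2*n) → ℝ |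
          ∃ σ, inW0 n σ ∧ y = fun i => (permAct n σ μ i : ℝ)} =
        {x : Fin (2*n) → ℝ | inXR n x ∧ (∀ j, 0 ≤ x j ∧ x j ≤ 1) ∧
          x ⟨0, by omega⟩ + x ⟨2*n - 1, by omega⟩ = 1 ∧
          ∀ σ, inW0 n σ → 1 ≤ ∑ j, (permAct n (tau n hn * σ) μ j : ℝ) * x j}) := by
  have hiso : IsIsotropic n μ := by
    rcases hμ with rfl | rfl
    exacts [isIsotropic_mu1 n, isIsotropic_mu2 n]
  have horbit := orbit_eq_isoClass hiso
  refine ⟨fun hodd => convexHull_orbit_eq (by omega) horbit horbit ?_,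
    fun heven => convexHull_orbit_eq (by omega) horbit (tauOrbit_eq_isoClass hn hiso) ?_⟩
  · rw [ZMod.natCast_eq_one_iff_odd.2 hodd, add_assoc, CharTwo.add_self_eq_zero, add_zero]
  · rw [ZMod.natCast_eq_zero_iff_even.2 heven, add_zero]

end OrthLM
end
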